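/- arXiv:cs/0701054 — 11 statements merged into one kernel-verified Lean document; each statement's English description precedes it below -/
import Mathlib

section
/- Let X be a finite nonempty set, let n ≥ 1 be an integer, and let Y_1, …, Y_n be subsets of X. Set α = (1/n) · Σ_{i=1}^n |Y_i| / |X|. Then for every non-negative integer k, (1/n^k) · Σ over all k-tuples (i_1,…,i_k) ∈ {1,…,n}^k of |Y_{i_1} ∩ ⋯ ∩ Y_{i_k}| is at least α^k · |X|, where for k = 0 the empty intersection is taken to be X. -/
/-- Let `X` be a finite nonempty set, `n ≥ 1`, and `Y_1,…,Y_n ⊆ X`.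
Set `α = (1/n) Σᵢ |Yᵢ|/|X|`. Then for every `k ≥ 0`,
`(1/n^k) Σ_{(i_1,…,i_k) ∈ [n]^k} |Y_{i_1} ∩ ⋯ ∩ Y_{i_k}| ≥ α^k |X|`,
where for `k = 0` the empty intersection is `X`. -/
theorem stmt0 {U : Type*} [DecidableEq U] (X : Finset U) (hX : X.Nonempty)
    (n : ℕ) (hn : 1 ≤ n) (Y : Fin n → Finset U) (hY : ∀ i, Y i ⊆ X)
    (α : ℝ) (hα : α = (1 / (n : ℝ)) * ∑ i, ((Y i).card : ℝ) / (X.card : ℝ))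
    (k : ℕ) :
    α ^ k * (X.card : ℝ) ≤
      (1 / (n : ℝ) ^ k) *
        ∑ f : Fin k → Fin n, ((X.filter fun x => ∀ l, x ∈ Y (f l)).card : ℝ) := by
  classical
  set D : U → ℕ := fun x => (Finset.univ.filter fun i => x ∈ Y i).card with hD
  have key : ∑ f : Fin k → Fin n, (X.filter fun x => ∀ l, x ∈ Y (f l)).card
      = ∑ x ∈ X, (D x) ^ k := by
    have h0 : ∀ f : Fin k → Fin n, (X.filter fun x => ∀ l, x ∈ Y (f l)).card
        = ∑ x ∈ X, (if ∀ l, x ∈ Y (f l) then 1 else 0) := by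
      intro f; rw [Finset.card_filter]
    simp_rw [h0]
    rw [Finset.sum_comm]
    refine Finset.sum_congr rfl fun x hx => ?_
    have h1 : ∑ f : Fin k → Fin n, (if ∀ l, x ∈ Y (f l) then 1 else 0)
        = (Finset.univ.filter fun f : Fin k → Fin n =>
            ∀ l, f l ∈ Finset.univ.filter (fun i => x ∈ Y i)).card := by
      rw [Finset.card_filter]
      exact Finset.sum_congr rfl fun f _ => by simp
    rw [h1]
    have h2 : (Finset.univ.filter fun f : Fin k → Fin n =>
          ∀ l, f l ∈ Finset.univ.filter (fun i => x ∈ Y i))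
        = Fintype.piFinset (fun _ : Fin k => Finset.univ.filter (fun i => x ∈ Y i)) := by
      ext f; simp [Fintype.mem_piFinset]
    rw [h2, Fintype.card_piFinset]
    simp [hD]
  have sumD : ∑ x ∈ X, (D x) = ∑ i, (Y i).card := by
    have h0 : ∀ x, D x = ∑ i : Fin n, (if x ∈ Y i then 1 else 0) := by
      intro x; rw [hD]; exact Finset.card_filter _ _
    simp_rw [h0]
    rw [Finset.sum_comm]
    refine Finset.sum_congr rfl fun i _ => ?_
    rw [← Finset.card_filter]
    congr 1
    rw [Finset.filter_mem_eq_inter, Finset.inter_eq_right.mpr (hY i)]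
  have hXc : (0:ℝ) < (X.card : ℝ) := by exact_mod_cast Finset.card_pos.mpr hX
  have hnc : (0:ℝ) < (n : ℝ) := by exact_mod_cast hn
  have hS : ∑ x ∈ X, (D x : ℝ) = α * ((n:ℝ) * X.card) := by
    have sumDR : (∑ x ∈ X, (D x : ℝ)) = ∑ i, ((Y i).card : ℝ) := by exact_mod_cast sumD
    rw [hα, ← Finset.sum_div, ← sumDR]
    field_simp
  -- main inequality
  cases k with
  | zero =>
    simp
  | succ m =>
    have jensen := pow_sum_div_card_le_sum_pow (f := fun x => (D x : ℝ)) (n := m)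
      (fun x _ => by positivity) (s := X)
    have hkey : (∑ f : Fin (m+1) → Fin n,
        ((X.filter fun x => ∀ l, x ∈ Y (f l)).card : ℝ)) = ∑ x ∈ X, (D x : ℝ) ^ (m+1) := by
      exact_mod_cast key
    rw [hkey]
    have hEq : α ^ (m+1) * (X.card : ℝ)
        = (1 / (n:ℝ)^(m+1)) * ((∑ x ∈ X, (D x : ℝ)) ^ (m+1) / (X.card:ℝ) ^ m) := by
      rw [hS]
      field_simp
      ring
    rw [hEq]
    apply mul_le_mul_of_nonneg_left jensen (by positivity)
end

section
/- Let G = (V,E) be a finite simple graph with |V| = N ≥ 1, and let α ∈ [0,1] be a real number with |E| ≥ α · C(N,2), where C(N,2) denotes the binomial coefficient (N choose 2). Then the number of 6-tuples (u_1,…,u_6) ∈ V^6 with u_1,…,u_6 pairwise distinct and with {u_a,u_b} ∈ E for every a ∈ {1,2} and every b ∈ {3,4,5,6} is at least (α^8 − 23/N) · N^6. -/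
/-!
Write `hom(K₂,₄, G)` for the number of maps `Fin 6 → V` sending `0, 1` to common neighbours
of the images of `2, …, 5`. Grouping them by the images `(v, w)` of `0, 1` gives
`hom(K₂,₄, G) = ∑ codeg(v, w)⁴`, and `∑ codeg(v, w) = ∑ deg(x)²`. Two applications of the power
mean inequality yield `(2|E|)⁸ ≤ N¹⁰ · hom(K₂,₄, G)`, and Bernoulli's inequality turns
`2|E| ≥ αN² - N` into `hom(K₂,₄, G) ≥ α⁸N⁶ - 8N⁵`. At most `C(6,2) · N⁵ = 15N⁵` maps identify
two of the six points, which accounts for the remaining error.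
-/

open Finset

section NonInjective

variable {ι V : Type*} [Fintype ι] [DecidableEq ι] [Fintype V] [DecidableEq V]

theorem card_filter_apply_eq_apply_le {i j : ι} (hij : i ≠ j) :
    #{f : ι → V | f i = f j} ≤ Fintype.card V ^ (Fintype.card ι - 1) :=
  calc #{f : ι → V | f i = f j}
      ≤ Fintype.card ({k // k ≠ j} → V) := by
        refine card_le_card_of_injOn (t := univ) (fun f k => f k) (fun _ _ => mem_univ _) ?_
        intro f hf g hg hfg
        rw [mem_coe, mem_filter] at hf hg
        funext k
        by_cases hk : k = j
        · rw [hk, ← hf.2, ← hg.2]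
          exact congrFun hfg ⟨i, hij⟩
        · exact congrFun hfg ⟨k, hk⟩
    _ = Fintype.card V ^ (Fintype.card ι - 1) := by simp [Fintype.card_subtype_compl]

theorem card_filter_not_injective_le :
    #{f : ι → V | ¬Function.Injective f} ≤
      (Fintype.card ι).choose 2 * Fintype.card V ^ (Fintype.card ι - 1) := by
  have hcover : ({f : ι → V | ¬Function.Injective f} : Finset _) ⊆
      ({e : Sym2 ι | ¬e.IsDiag} : Finset _).biUnion fun e => {f | (e.map f).IsDiag} := by
    intro f hf
    obtain ⟨i, j, hf, hij⟩ := Function.not_injective_iff.mp (mem_filter.mp hf).2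
    simp only [mem_biUnion, mem_filter, mem_univ, true_and]
    exact ⟨s(i, j), Sym2.mk_isDiag_iff.not.mpr hij, by simpa [Sym2.map_mk] using hf⟩
  have hfiber : ∀ e ∈ ({e : Sym2 ι | ¬e.IsDiag} : Finset _),
      #{f : ι → V | (e.map f).IsDiag} ≤ Fintype.card V ^ (Fintype.card ι - 1) := by
    intro e he
    induction e using Sym2.ind with
    | _ i j =>
      rw [mem_filter, Sym2.mk_isDiag_iff] at he
      simpa [Sym2.map_mk] using card_filter_apply_eq_apply_le (V := V) he.2
  calc _ ≤ _ := card_le_card hcover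
    _ ≤ _ := card_biUnion_le_card_mul _ _ _ hfiber
    _ = _ := by rw [← Fintype.card_subtype, Sym2.card_subtype_not_diag]

end NonInjective

namespace SimpleGraph

variable {V : Type*} [Fintype V] (G : SimpleGraph V) [DecidableRel G.Adj]

def codegree (v w : V) : ℕ := #{x | G.Adj v x ∧ G.Adj w x}

theorem sum_sum_codegree : ∑ v, ∑ w, G.codegree v w = ∑ x, G.degree x ^ 2 :=
  calc ∑ v, ∑ w, G.codegree v w
      = ∑ v, ∑ w, ∑ x, (if G.Adj v x then 1 else 0) * (if G.Adj w x then 1 else 0) := by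
        simp only [codegree, card_filter, ite_zero_mul_ite_zero, mul_one]
    _ = ∑ x, (∑ v, if G.Adj v x then 1 else 0) * (∑ w, if G.Adj w x then 1 else 0) := by
        simp only [sum_mul_sum]
        rw [← Fintype.sum_prod_type', sum_comm]
        simp only [Fintype.sum_prod_type]
    _ = ∑ x, G.degree x ^ 2 := sum_congr rfl fun x _ => by
        simp only [G.adj_comm _ x, ← G.degree_eq_sum_if_adj (R := ℕ), Nat.cast_id, sq]

theorem card_filter_forall_adj {n : ℕ} (v w : V) :
    #{g : Fin n → V | ∀ i, G.Adj v (g i) ∧ G.Adj w (g i)} = G.codegree v w ^ n := by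
  have : ({g : Fin n → V | ∀ i, G.Adj v (g i) ∧ G.Adj w (g i)} : Finset _) =
      Fintype.piFinset fun _ => {x | G.Adj v x ∧ G.Adj w x} := by
    ext g
    simp
  rw [this, Fintype.card_piFinset_const, codegree]

/-- Homomorphisms from `K₂,₄` to `G`, with `0, 1` the vertices of the part of size two. -/
def k24Homs : Finset (Fin 6 → V) :=
  {f | ∀ a b : Fin 6, (a : ℕ) < 2 → 2 ≤ (b : ℕ) → G.Adj (f a) (f b)}

theorem card_k24Homs : #G.k24Homs = ∑ v, ∑ w, G.codegree v w ^ 4 := by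
  let e : V × V × (Fin 4 → V) ≃ (Fin 6 → V) :=
    (Equiv.prodCongr (.refl V) (Fin.consEquiv fun _ => V)).trans (Fin.consEquiv fun _ => V)
  calc #G.k24Homs
      = #{p : V × V × (Fin 4 → V) | ∀ k, G.Adj p.1 (p.2.2 k) ∧ G.Adj p.2.1 (p.2.2 k)} :=
        card_equiv e.symm fun f => by simp [k24Homs, e, Fin.forall_fin_succ]; tauto
    _ = ∑ v, ∑ w, #{g : Fin 4 → V | ∀ k, G.Adj v (g k) ∧ G.Adj w (g k)} := by
        simp only [card_filter, Fintype.sum_prod_type]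
    _ = ∑ v, ∑ w, G.codegree v w ^ 4 := by simp only [G.card_filter_forall_adj]

theorem sum_degree_pow_eight_le :
    (∑ v, G.degree v) ^ 8 ≤ Fintype.card V ^ 10 * #G.k24Homs := by
  have hdeg : (∑ v, G.degree v) ^ 2 ≤ Fintype.card V * ∑ v, G.degree v ^ 2 :=
    sq_sum_le_card_mul_sum_sq
  have hcodeg : (∑ v, G.degree v ^ 2) ^ 4 ≤ (Fintype.card V ^ 2) ^ 3 * #G.k24Homs := by
    rw [← sum_sum_codegree, card_k24Homs]
    simpa [Fintype.sum_prod_type, sq] using pow_sum_le_card_mul_sum_pow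
      (s := (univ : Finset (V × V))) (f := fun p => G.codegree p.1 p.2) (fun _ _ => Nat.zero_le _) 3
  calc (∑ v, G.degree v) ^ 8 = ((∑ v, G.degree v) ^ 2) ^ 4 := by ring
    _ ≤ (Fintype.card V * ∑ v, G.degree v ^ 2) ^ 4 := by gcongr
    _ ≤ Fintype.card V ^ 4 * ((Fintype.card V ^ 2) ^ 3 * #G.k24Homs) := by
        rw [mul_pow]
        gcongr
    _ = Fintype.card V ^ 10 * #G.k24Homs := by ring

theorem mul_card_sq_sub_card_le_sum_degree [DecidableEq V] {α : ℝ} (hα1 : α ≤ 1)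
    (hE : α * (Fintype.card V).choose 2 ≤ #G.edgeFinset) :
    α * (Fintype.card V : ℝ) ^ 2 - Fintype.card V ≤ ∑ v, (G.degree v : ℝ) := by
  have hsum : (∑ v, G.degree v : ℝ) = 2 * #G.edgeFinset := by
    exact_mod_cast G.sum_degrees_eq_twice_card_edges
  rw [Nat.cast_choose_two] at hE
  nlinarith [(Fintype.card V).cast_nonneg (α := ℝ)]

theorem le_card_k24Homs [DecidableEq V] {α : ℝ} (hα0 : 0 ≤ α) (hα1 : α ≤ 1)
    (hE : α * (Fintype.card V).choose 2 ≤ #G.edgeFinset) :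
    α ^ 8 * (Fintype.card V : ℝ) ^ 6 - 8 * (Fintype.card V : ℝ) ^ 5 ≤ #G.k24Homs := by
  have hcount : (∑ v, (G.degree v : ℝ)) ^ 8 ≤ (Fintype.card V : ℝ) ^ 10 * #G.k24Homs := by
    exact_mod_cast G.sum_degree_pow_eight_le
  have hdeg := G.mul_card_sq_sub_card_le_sum_degree hα1 hE
  set N : ℝ := (Fintype.card V : ℝ)
  have hN0 : 0 ≤ N := Nat.cast_nonneg _
  have hα7 : α ^ 7 ≤ 1 := pow_le_one₀ hα0 hα1
  have hhom0 : (0 : ℝ) ≤ #G.k24Homs := Nat.cast_nonneg _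
  rcases lt_or_ge (α * N) 1 with hsmall | hlarge
  · have : α ^ 8 * N ^ 6 ≤ N ^ 5 :=
      calc α ^ 8 * N ^ 6 = α ^ 7 * (α * N) * N ^ 5 := by ring
        _ ≤ 1 * 1 * N ^ 5 := by gcongr
        _ = N ^ 5 := by ring
    linarith [pow_nonneg hN0 5]
  · have hN : 0 < N := by nlinarith
    have hbernoulli : (α * N ^ 2) ^ 8 + 8 * (α * N ^ 2) ^ 7 * -N ≤ (α * N ^ 2 + -N) ^ 8 := by
      simpa using pow_add_mul_le_add_pow (a := α * N ^ 2) (b := -N) (by positivity)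
        (by nlinarith) 8
    refine le_of_mul_le_mul_left ?_ (pow_pos hN 10)
    calc N ^ 10 * (α ^ 8 * N ^ 6 - 8 * N ^ 5)
        ≤ (α * N ^ 2) ^ 8 + 8 * (α * N ^ 2) ^ 7 * -N := by nlinarith [pow_pos hN 15]
      _ ≤ (∑ v, (G.degree v : ℝ)) ^ 8 := hbernoulli.trans (by gcongr <;> nlinarith)
      _ ≤ N ^ 10 * #G.k24Homs := hcount

end SimpleGraph

theorem stmt2_general {V : Type*} [Fintype V] [DecidableEq V]
    (G : SimpleGraph V) [DecidableRel G.Adj]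
    (N : ℕ) (hN : Fintype.card V = N)
    (α : ℝ) (hα0 : 0 ≤ α) (hα1 : α ≤ 1)
    (hE : α * (N.choose 2 : ℝ) ≤ (G.edgeFinset.card : ℝ)) :
    (α ^ 8 - 23 / (N : ℝ)) * (N : ℝ) ^ 6 ≤
      ((Finset.univ.filter fun u : Fin 6 → V =>
        Function.Injective u ∧
          ∀ a b : Fin 6, (a : ℕ) < 2 → 2 ≤ (b : ℕ) → G.Adj (u a) (u b)).card : ℝ) := by
  subst hN
  have hnoninj := card_filter_not_injective_le (ι := Fin 6) (V := V)
  simp only [Fintype.card_fin, show (6 : ℕ).choose 2 = 15 by decide] at hnoninj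
  have hsplit : #G.k24Homs ≤ #{u : Fin 6 → V | Function.Injective u ∧
      ∀ a b : Fin 6, (a : ℕ) < 2 → 2 ≤ (b : ℕ) → G.Adj (u a) (u b)} +
      15 * Fintype.card V ^ 5 := by
    rw [← card_filter_add_card_filter_not (s := G.k24Homs) Function.Injective,
      SimpleGraph.k24Homs, filter_filter]
    gcongr ?_ + ?_
    · simp only [and_comm, le_refl]
    · exact (card_le_card (filter_subset_filter _ (subset_univ _))).trans hnoninj
  have hrhs : (α ^ 8 - 23 / (Fintype.card V : ℝ)) * (Fintype.card V : ℝ) ^ 6 =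
      α ^ 8 * (Fintype.card V : ℝ) ^ 6 - 23 * (Fintype.card V : ℝ) ^ 5 := by
    rcases eq_or_ne (Fintype.card V : ℝ) 0 with h | h
    · simp [h]
    · field_simp
  have hsplit' := (Nat.cast_le (α := ℝ)).mpr hsplit
  push_cast at hsplit'
  linarith [G.le_card_k24Homs hα0 hα1 hE]

/-- Let `G = (V,E)` be a finite simple graph with `|V| = N ≥ 1`, and let
`α ∈ [0,1]` with `|E| ≥ α·C(N,2)`.  Then the number of 6-tuples `(u₁,…,u₆) ∈ V⁶` with
`u₁,…,u₆` pairwise distinct and `{u_a,u_b} ∈ E` for every `a ∈ {1,2}` and `b ∈ {3,4,5,6}`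
is at least `(α⁸ − 23/N)·N⁶`. -/
theorem stmt2 {V : Type*} [Fintype V] [DecidableEq V]
    (G : SimpleGraph V) [DecidableRel G.Adj]
    (N : ℕ) (hN : Fintype.card V = N) (hN1 : 1 ≤ N)
    (α : ℝ) (hα0 : 0 ≤ α) (hα1 : α ≤ 1)
    (hE : α * (N.choose 2 : ℝ) ≤ (G.edgeFinset.card : ℝ)) :
    (α ^ 8 - 23 / (N : ℝ)) * (N : ℝ) ^ 6 ≤
      ((Finset.univ.filter fun u : Fin 6 → V =>
        Function.Injective u ∧
          ∀ a b : Fin 6, (a : ℕ) < 2 → 2 ≤ (b : ℕ) → G.Adj (u a) (u b)).card : ℝ) :=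
  stmt2_general G N hN α hα0 hα1 hE
end

section
/- For every integer m ≥ 1 that is a power of 3, there exists a pairwise independent set Π of permutations of {1,…,3m} with |Π| = 9m^2 − 3m. -/
/-!
The affine maps `x ↦ a * x + b` (`a ≠ 0`) of a finite field `K` form a sharply 2-transitive
set of permutations: for `x₁ ≠ x₂` and `y₁ ≠ y₂` exactly one of them sends `x₁ ↦ y₁` and
`x₂ ↦ y₂`. A sharply 2-transitive set is pairwise independent, with one permutation for each
ordered pair of distinct points, i.e. `q (q - 1)` of them. For `m = 3 ^ k` take
`K = 𝔽_{3m}`; then `3m (3m - 1) = 9m² - 3m`.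
-/

/-- A finite nonempty set `P` of permutations of a set of size `N ≥ 2` is *pairwise
independent* if for all `a ≠ b` and `c ≠ d`, the number of `π ∈ P` with `π a = c` and
`π b = d` equals `|P| / (N(N−1))` (stated multiplicatively to avoid division). -/
def PairwiseIndepPerms {α : Type*} [DecidableEq α] (N : ℕ) (P : Finset (Equiv.Perm α)) : Prop :=
  P.Nonempty ∧
    ∀ a b c d : α, a ≠ b → c ≠ d →
      (P.filter fun π => π a = c ∧ π b = d).card * (N * (N - 1)) = P.card

open Finset Equiv

def IsSharplyTwoTransitive {α : Type*} (P : Finset (Perm α)) : Prop :=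
  ∀ a b c d : α, a ≠ b → c ≠ d → ∃! π, π ∈ P ∧ π a = c ∧ π b = d

namespace IsSharplyTwoTransitive

variable {α β : Type*} {P : Finset (Perm α)}

theorem card_filter_eq_one [DecidableEq α] (h : IsSharplyTwoTransitive P) {a b c d : α}
    (hab : a ≠ b) (hcd : c ≠ d) : (P.filter fun π => π a = c ∧ π b = d).card = 1 := by
  obtain ⟨π, hπ, huniq⟩ := h a b c d hab hcd
  refine card_eq_one.mpr ⟨π, eq_singleton_iff_unique_mem.mpr ⟨mem_filter.mpr hπ, ?_⟩⟩
  intro σ hσ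
  exact huniq σ (mem_filter.mp hσ)

theorem card_eq [Fintype α] [Nontrivial α] (h : IsSharplyTwoTransitive P) :
    P.card = Fintype.card α * (Fintype.card α - 1) := by
  obtain ⟨a, b, hab⟩ := exists_pair_ne α
  have hpairs : P.card = (univ : Finset α).offDiag.card := by
    refine card_bij (fun π _ => (π a, π b)) (fun π _ => ?_) (fun π hπ σ hσ hπσ => ?_)
      (fun p hp => ?_)
    · simpa using hab
    · simp only [Prod.mk.injEq] at hπσ
      exact (h a b (π a) (π b) hab (π.injective.ne hab)).unique ⟨hπ, rfl, rfl⟩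
        ⟨hσ, hπσ.1.symm, hπσ.2.symm⟩
    · obtain ⟨π, ⟨hπ, hπa, hπb⟩, -⟩ := h a b p.1 p.2 hab (by simpa using hp)
      exact ⟨π, hπ, by simp [hπa, hπb]⟩
  rw [hpairs, offDiag_card, card_univ, Nat.mul_sub_one]

theorem pairwiseIndepPerms [DecidableEq α] [Fintype α] [Nontrivial α]
    (h : IsSharplyTwoTransitive P) :
    PairwiseIndepPerms (Fintype.card α) P := by
  refine ⟨card_pos.mp ?_, fun a b c d hab hcd => ?_⟩
  · rw [h.card_eq]
    exact Nat.mul_pos Fintype.card_pos (Nat.sub_pos_of_lt Fintype.one_lt_card)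
  · rw [h.card_filter_eq_one hab hcd, one_mul, h.card_eq]

theorem map_permCongr (h : IsSharplyTwoTransitive P) (e : α ≃ β) :
    IsSharplyTwoTransitive (P.map (e.permCongr : Perm α ≃ Perm β).toEmbedding) := by
  intro a b c d hab hcd
  obtain ⟨π, ⟨hπ, hπa, hπb⟩, huniq⟩ :=
    h (e.symm a) (e.symm b) (e.symm c) (e.symm d) (by simpa using hab) (by simpa using hcd)
  refine ⟨e.permCongr π, ⟨mem_map_of_mem _ hπ, ?_, ?_⟩, ?_⟩
  · simp [permCongr_apply, hπa]
  · simp [permCongr_apply, hπb]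
  · rintro _ ⟨hσ, hσa, hσb⟩
    obtain ⟨σ, hσP, rfl⟩ := mem_map.mp hσ
    simp only [Equiv.coe_toEmbedding, permCongr_apply] at hσa hσb ⊢
    rw [huniq σ ⟨hσP, by simp [← hσa], by simp [← hσb]⟩]

end IsSharplyTwoTransitive

section AffinePerms

variable {K : Type*} [Field K]

def affinePerm (p : Kˣ × K) : Perm K :=
  (Equiv.mulLeft₀ (p.1 : K) p.1.ne_zero).trans (Equiv.addRight p.2)

@[simp]
theorem affinePerm_apply (p : Kˣ × K) (x : K) : affinePerm p x = p.1 * x + p.2 := rfl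

theorem affinePerm_injective : Function.Injective (affinePerm (K := K)) := by
  intro p q hpq
  have h0 : p.2 = q.2 := by simpa using DFunLike.congr_fun hpq 0
  have h1 : (p.1 : K) = q.1 := by simpa [h0] using DFunLike.congr_fun hpq 1
  exact Prod.ext (Units.ext h1) h0

theorem existsUnique_affinePerm {x₁ x₂ y₁ y₂ : K} (hx : x₁ ≠ x₂) (hy : y₁ ≠ y₂) :
    ∃! p : Kˣ × K, affinePerm p x₁ = y₁ ∧ affinePerm p x₂ = y₂ := by
  have hx' : x₁ - x₂ ≠ 0 := sub_ne_zero.mpr hx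
  set a : K := (y₁ - y₂) / (x₁ - x₂)
  have ha : a ≠ 0 := div_ne_zero (sub_ne_zero.mpr hy) hx'
  have hslope : a * (x₁ - x₂) = y₁ - y₂ := div_mul_cancel₀ _ hx'
  refine ⟨(Units.mk0 a ha, y₁ - a * x₁), ⟨?_, ?_⟩, ?_⟩
  · simp
  · simp only [affinePerm_apply, Units.val_mk0]
    linear_combination -hslope
  · rintro ⟨u, b⟩ ⟨h₁, h₂⟩
    simp only [affinePerm_apply] at h₁ h₂
    have hu : (u : K) = a := by
      rw [eq_div_iff hx']
      linear_combination h₁ - h₂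
    refine Prod.ext (Units.ext (by simpa using hu)) ?_
    show b = y₁ - a * x₁
    rw [← hu]
    linear_combination h₁

variable [Fintype K] [DecidableEq K]

def affinePerms (K : Type*) [Field K] [Fintype K] [DecidableEq K] : Finset (Perm K) :=
  univ.map ⟨affinePerm, affinePerm_injective⟩

theorem isSharplyTwoTransitive_affinePerms : IsSharplyTwoTransitive (affinePerms K) := by
  intro a b c d hab hcd
  obtain ⟨p, hp, huniq⟩ := existsUnique_affinePerm hab hcd
  refine ⟨affinePerm p, ⟨mem_map_of_mem _ (mem_univ p), hp⟩, ?_⟩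
  rintro _ ⟨hσ, hσa⟩
  obtain ⟨q, -, rfl⟩ := mem_map.mp hσ
  exact congrArg affinePerm (huniq q hσa)

end AffinePerms

theorem stmt3_general (m : ℕ) (hpow : ∃ k : ℕ, m = 3 ^ k) :
    ∃ P : Finset (Equiv.Perm (Fin (3 * m))),
      PairwiseIndepPerms (3 * m) P ∧ P.card = 9 * m ^ 2 - 3 * m := by
  classical
  obtain ⟨k, rfl⟩ := hpow
  let K := GaloisField 3 (k + 1)
  let : Fintype K := Fintype.ofFinite K
  have hK : Fintype.card K = 3 * 3 ^ k := by
    rw [← Nat.card_eq_fintype_card, GaloisField.card 3 (k + 1) k.succ_ne_zero, pow_succ']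
  have : Nontrivial (Fin (3 * 3 ^ k)) :=
    Fin.nontrivial_iff_two_le.mpr (by linarith [Nat.one_le_pow k 3 three_pos])
  have hP := isSharplyTwoTransitive_affinePerms.map_permCongr (Fintype.equivFinOfCardEq hK)
  refine ⟨_, by simpa using hP.pairwiseIndepPerms, ?_⟩
  rw [hP.card_eq, Fintype.card_fin, Nat.mul_sub_one]
  ring_nf

/-- For every integer `m ≥ 1` that is a power of `3`, there exists a pairwise
independent set `Π` of permutations of `{1,…,3m}` with `|Π| = 9m² − 3m`. -/
theorem stmt3 (m : ℕ) (hm : 1 ≤ m) (hpow : ∃ k : ℕ, m = 3 ^ k) :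
    ∃ P : Finset (Equiv.Perm (Fin (3 * m))),
      PairwiseIndepPerms (3 * m) P ∧ P.card = 9 * m ^ 2 - 3 * m :=
  stmt3_general m hpow
end

section
/- Let m ≥ 1 be an integer, let Π be a pairwise independent set of permutations of {1,…,3m}, let E be a set of 2-element subsets of {1,…,3m}, and let V ⊆ {1,…,3m}. Then Σ_{π ∈ Π} |{e ∈ E : e ⊆ π(V)}| · C(3m,2) = |Π| · |E| · (|V| · (|V| − 1) / 2), where π(V) denotes the image of V under π and C(3m,2) denotes the binomial coefficient (3m choose 2). -/
/-- Let `m ≥ 1`, let `Π` be a pairwise independent set of permutations of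
`{1,…,3m}`, let `E` be a set of 2-element subsets of `{1,…,3m}`, and `V ⊆ {1,…,3m}`.  Then
`Σ_{π ∈ Π} |{e ∈ E : e ⊆ π(V)}| · C(3m,2) = |Π| · |E| · (|V|(|V|−1)/2)`. -/
theorem stmt5 (m : ℕ) (hm : 1 ≤ m) (P : Finset (Equiv.Perm (Fin (3 * m))))
    (hP : PairwiseIndepPerms (3 * m) P)
    (E : Finset (Finset (Fin (3 * m)))) (hE : ∀ e ∈ E, e.card = 2)
    (V : Finset (Fin (3 * m))) :
    (∑ π ∈ P, (E.filter fun e => e ⊆ V.image π).card) * (3 * m).choose 2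
      = P.card * E.card * (V.card * (V.card - 1) / 2) := by
  obtain ⟨hPne, hind⟩ := hP
  have hvv : V.card * (V.card - 1) = V.card * V.card - V.card := by
    cases h : V.card with
    | zero => simp
    | succ n => simp [Nat.mul_succ, Nat.succ_mul, Nat.succ_sub_one]
  have key : ∀ e ∈ E, (P.filter fun π : Equiv.Perm (Fin (3 * m)) => e ⊆ V.image π).card
        * (3 * m * (3 * m - 1)) = P.card * (V.card * (V.card - 1)) := by
    intro e he
    obtain ⟨c, d, hcd, rfl⟩ := Finset.card_eq_two.mp (hE e he)
    have hfib : ∀ π ∈ P.filter fun π : Equiv.Perm (Fin (3 * m)) =>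
        ({c, d} : Finset (Fin (3 * m))) ⊆ V.image π,
        (π.symm c, π.symm d) ∈ V.offDiag := by
      intro π hπ
      simp only [Finset.mem_filter] at hπ
      have hc : c ∈ V.image π := hπ.2 (by simp)
      have hd : d ∈ V.image π := hπ.2 (by simp)
      simp only [Finset.mem_image] at hc hd
      obtain ⟨a, ha, rfl⟩ := hc
      obtain ⟨b, hb, rfl⟩ := hd
      simp only [Finset.mem_offDiag, Equiv.symm_apply_apply]
      exact ⟨ha, hb, fun h => hcd (by rw [h])⟩
    rw [Finset.card_eq_sum_card_fiberwise hfib, Finset.sum_mul]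
    have hterm : ∀ p ∈ V.offDiag,
        ((P.filter fun π : Equiv.Perm (Fin (3 * m)) =>
            ({c, d} : Finset (Fin (3 * m))) ⊆ V.image π).filter
          fun π => (π.symm c, π.symm d) = p).card * (3 * m * (3 * m - 1)) = P.card := by
      rintro ⟨a, b⟩ hp
      simp only [Finset.mem_offDiag] at hp
      have hfe : ((P.filter fun π : Equiv.Perm (Fin (3 * m)) =>
            ({c, d} : Finset (Fin (3 * m))) ⊆ V.image π).filter
          fun π => (π.symm c, π.symm d) = (a, b))
          = P.filter fun π => π a = c ∧ π b = d := by
        ext π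
        simp only [Finset.mem_filter, Prod.mk.injEq]
        constructor
        · rintro ⟨⟨hπP, _⟩, h1, h2⟩
          exact ⟨hπP, by rw [← h1, Equiv.apply_symm_apply],
            by rw [← h2, Equiv.apply_symm_apply]⟩
        · rintro ⟨hπP, h1, h2⟩
          refine ⟨⟨hπP, ?_⟩, by simp [← h1], by simp [← h2]⟩
          intro x hx
          simp only [Finset.mem_insert, Finset.mem_singleton] at hx
          rcases hx with rfl | rfl
          · exact Finset.mem_image.mpr ⟨a, hp.1, h1⟩
          · exact Finset.mem_image.mpr ⟨b, hp.2.1, h2⟩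
      rw [hfe]
      exact hind a b c d hp.2.2 hcd
    rw [Finset.sum_congr rfl hterm, Finset.sum_const, smul_eq_mul,
      Finset.offDiag_card, ← hvv, mul_comm]
  have swap : (∑ π ∈ P, (E.filter fun e => e ⊆ V.image π).card)
      = ∑ e ∈ E, (P.filter fun π : Equiv.Perm (Fin (3 * m)) => e ⊆ V.image π).card := by
    simp only [Finset.card_filter]
    exact Finset.sum_comm
  have hN1 : 3 * m - 1 + 1 = 3 * m := by omega
  have hNd : 2 ∣ 3 * m * (3 * m - 1) := by
    have h := Nat.even_mul_succ_self (3 * m - 1)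
    rw [hN1, mul_comm] at h
    exact h.two_dvd
  have hvd : 2 ∣ V.card * (V.card - 1) := by
    rcases Nat.even_or_odd V.card with h | h
    · exact (h.mul_right _).two_dvd
    · exact ((Nat.Odd.sub_odd h odd_one).mul_left V.card).two_dvd
  have h2 : (3 * m).choose 2 * 2 = 3 * m * (3 * m - 1) := by
    rw [Nat.choose_two_right, Nat.div_mul_cancel hNd]
  have hv2 : V.card * (V.card - 1) / 2 * 2 = V.card * (V.card - 1) :=
    Nat.div_mul_cancel hvd
  apply Nat.eq_of_mul_eq_mul_right (show 0 < 2 from by norm_num)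
  calc (∑ π ∈ P, (E.filter fun e => e ⊆ V.image π).card) * (3 * m).choose 2 * 2
      = (∑ e ∈ E, (P.filter fun π : Equiv.Perm (Fin (3 * m)) => e ⊆ V.image π).card)
          * (3 * m * (3 * m - 1)) := by rw [mul_assoc, h2, swap]
    _ = ∑ e ∈ E, (P.filter fun π : Equiv.Perm (Fin (3 * m)) => e ⊆ V.image π).card
          * (3 * m * (3 * m - 1)) := Finset.sum_mul ..
    _ = ∑ _e ∈ E, P.card * (V.card * (V.card - 1)) := Finset.sum_congr rfl key
    _ = E.card * (P.card * (V.card * (V.card - 1))) := by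
        rw [Finset.sum_const, smul_eq_mul]
    _ = P.card * E.card * (V.card * (V.card - 1) / 2) * 2 := by
        rw [mul_assoc (P.card * E.card), hv2]; ring
end

section
/- Let m ≥ 1 be an integer and fix a partition datum (E,V) on {1,…,3m}. Assume Σ_{i=1}^{m} |E_i| ≥ (m/2) · C(3m,2) and Σ_{j=1}^{2m+1} |V_j| ≥ (2m+1) · (3m/2). Let Π be a pairwise independent set of permutations of {1,…,3m}. Then (1/|Π|) · Σ_{π ∈ Π} δ(E, πV) ≥ 2^{−12} − 31/(3m − 1), where πV denotes the family of vertex sets whose j-th member is the image π(V_j). -/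
/-- The density `δ(E,V)` of a partition datum on `{1,…,3m}`: `1/(m²(2m+1)⁵C(3m,2))` times
the sum over `(i₁,i₂) ∈ [m]²` and `(j₁,…,j₅) ∈ [2m+1]⁵` of
`|⋂_{k=1}^5 E_{i₁}[V_{j_k}] ∩ E_{i₂}[V_{j_k}]|`, where `E[W] = {e ∈ E : e ⊆ W}`. -/
noncomputable def density (m : ℕ) (E : Fin m → Finset (Finset (Fin (3 * m))))
    (V : Fin (2 * m + 1) → Finset (Fin (3 * m))) : ℝ :=
  (∑ i : Fin m × Fin m, ∑ j : Fin 5 → Fin (2 * m + 1),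
      ((Finset.univ.inf fun k : Fin 5 =>
        ((E i.1).filter fun e => e ⊆ V (j k)) ∩
        ((E i.2).filter fun e => e ⊆ V (j k))).card : ℝ)) /
    ((m : ℝ) ^ 2 * (2 * (m : ℝ) + 1) ^ 5 * ((3 * m).choose 2 : ℝ))

open Finset

section Counting

variable {α ι κ : Type*} [DecidableEq α] [Fintype ι] [Fintype κ]

def memCount (E : ι → Finset (Finset α)) (e : Finset α) : ℕ := #{i | e ∈ E i}

def subsetCount (W : κ → Finset α) (e : Finset α) : ℕ := #{j | e ⊆ W j}

-- For `n = 0` the infimum would be the empty one, `univ`.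
theorem sum_card_inf_eq_sum_memCount_sq_mul_subsetCount_pow [Fintype α] {n : ℕ} [NeZero n]
    (E : ι → Finset (Finset α)) (W : κ → Finset α) :
    ∑ i : ι × ι, ∑ j : Fin n → κ,
      #(univ.inf fun k => ((E i.1).filter fun e => e ⊆ W (j k)) ∩
        ((E i.2).filter fun e => e ⊆ W (j k)))
      = ∑ e, memCount E e ^ 2 * subsetCount W e ^ n := by
  have hinf : ∀ (i : ι × ι) (j : Fin n → κ),
      (univ.inf fun k => ((E i.1).filter fun e => e ⊆ W (j k)) ∩
        ((E i.2).filter fun e => e ⊆ W (j k)))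
        = univ.filter fun e => (e ∈ E i.1 ∧ e ∈ E i.2) ∧ ∀ k, e ⊆ W (j k) := by
    intro i j
    ext e
    simp only [mem_inf, mem_inter, mem_filter, mem_univ, true_and, forall_and,
      forall_const]
    tauto
  have hpairs : ∀ e, #{i : ι × ι | e ∈ E i.1 ∧ e ∈ E i.2} = memCount E e ^ 2 := by
    intro e
    rw [memCount, sq, ← card_product]
    congr 1
    ext i
    simp
  have htuples : ∀ e, #{j : Fin n → κ | ∀ k, e ⊆ W (j k)} = subsetCount W e ^ n := by
    intro e
    rw [subsetCount, ← Fintype.card_piFinset_const]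
    congr 1
    ext j
    simp [Fintype.mem_piFinset]
  simp only [← hpairs, ← htuples, hinf, card_filter, sum_mul_sum, ite_zero_mul_ite_zero, mul_one]
  conv_lhs => enter [2, i]; rw [sum_comm]
  exact sum_comm

theorem sq_sum_card_le_choose_mul_sum_memCount_sq [Fintype α] {k : ℕ} (E : ι → Finset (Finset α))
    (hE : ∀ i, ∀ e ∈ E i, #e = k) :
    (∑ i, #(E i)) ^ 2 ≤ (Fintype.card α).choose k * ∑ e, memCount E e ^ 2 := by
  have hcount : ∑ i, #(E i) = ∑ e ∈ powersetCard k univ, memCount E e := by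
    have hE' : ∀ i, #(E i) = #{e ∈ powersetCard k univ | e ∈ E i} := fun i => by
      congr 1
      ext e
      simpa [mem_powersetCard_univ] using fun he => hE i e he
    simp only [hE', memCount, card_filter]
    exact sum_comm
  calc (∑ i, #(E i)) ^ 2
      ≤ #(powersetCard k (univ : Finset α)) * ∑ e ∈ powersetCard k univ, memCount E e ^ 2 := by
        rw [hcount]; exact sq_sum_le_card_mul_sum_sq
    _ ≤ (Fintype.card α).choose k * ∑ e, memCount E e ^ 2 := by
        rw [card_powersetCard, card_univ]
        gcongr
        exact subset_univ _

end Counting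

-- `T ↦ T² / |κ| - T` is increasing for `T ≥ |κ| / 2`.
theorem mul_mul_sub_one_le_sum_card_offDiag {α κ : Type*} [Fintype κ] (W : κ → Finset α) {s : ℝ}
    (hs : 1 / 2 ≤ s) (hW : Fintype.card κ * s ≤ ∑ j, (#(W j) : ℝ)) :
    Fintype.card κ * s * (s - 1) ≤ ∑ j, (#(W j).offDiag : ℝ) := by
  rcases (Nat.cast_nonneg _ : (0 : ℝ) ≤ Fintype.card κ).eq_or_lt with hK | hK
  · rw [← hK, zero_mul, zero_mul]
    positivity
  have hoffDiag : ∀ j, (#(W j).offDiag : ℝ) = (#(W j) : ℝ) ^ 2 - #(W j) := fun j => by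
    rw [offDiag_card, Nat.cast_sub (Nat.le_mul_self _)]
    push_cast
    ring
  have hCS := sq_sum_le_card_mul_sum_sq (s := (univ : Finset κ)) (f := fun j => (#(W j) : ℝ))
  rw [card_univ] at hCS
  simp only [hoffDiag, sum_sub_distrib]
  set K : ℝ := (Fintype.card κ : ℝ)
  set T := ∑ j, (#(W j) : ℝ)
  have : K * (K * s * (s - 1)) ≤ K * ((∑ j, (#(W j) : ℝ) ^ 2) - T) := by
    nlinarith [mul_nonneg (sub_nonneg.2 hW) (by nlinarith : (0 : ℝ) ≤ T + K * s - K)]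
  exact le_of_mul_le_mul_left this hK

section PairwiseIndep

variable {α : Type*} [DecidableEq α] {N : ℕ} {P : Finset (Equiv.Perm α)}

theorem PairwiseIndepPerms.card_filter_pair_subset_image_mul (hP : PairwiseIndepPerms N P)
    (S : Finset α) {x y : α} (hxy : x ≠ y) :
    #(P.filter fun π : Equiv.Perm α => {x, y} ⊆ S.image π) * (N * (N - 1)) = #S.offDiag * #P := by
  have hpair : ∀ π : Equiv.Perm α, {x, y} ⊆ S.image ⇑π ↔ (π.symm x, π.symm y) ∈ S.offDiag := by
    intro π
    simp [insert_subset_iff, mem_offDiag, hxy, ← Equiv.eq_symm_apply]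
  have hfiber : ∀ p ∈ S.offDiag, #{π ∈ P | (π.symm x, π.symm y) = p} * (N * (N - 1)) = #P := by
    intro p hp
    rw [← hP.2 p.1 p.2 x y (mem_offDiag.1 hp).2.2 hxy]
    congr 2
    ext π
    simp only [mem_filter, Prod.ext_iff, Equiv.symm_apply_eq, eq_comm (a := x), eq_comm (a := y)]
  rw [filter_congr fun π _ => hpair π, ← sum_card_fiberwise_eq_card_filter, sum_mul,
    sum_congr rfl hfiber, sum_const, smul_eq_mul]

theorem PairwiseIndepPerms.pow_le_sum_subsetCount_pow {κ : Type*} [Fintype κ]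
    (hP : PairwiseIndepPerms N P) (W : κ → Finset α) {x y : α} (hxy : x ≠ y) (n : ℕ) :
    (#P : ℝ) * ((∑ j, #(W j).offDiag : ℕ) / (N * (N - 1) : ℕ) : ℝ) ^ (n + 1)
      ≤ ∑ π ∈ P, (subsetCount (fun j => (W j).image π) {x, y} : ℝ) ^ (n + 1) := by
  have hP0 : (#P : ℝ) ≠ 0 := by exact_mod_cast hP.1.card_pos.ne'
  have hN : ((N * (N - 1) : ℕ) : ℝ) ≠ 0 := by
    have := hP.2 x y x y hxy hxy
    intro h
    rw [Nat.cast_eq_zero.1 h, mul_zero] at this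
    exact hP.1.card_pos.ne this
  have hsum : ∑ π ∈ P, (subsetCount (fun j => (W j).image π) {x, y} : ℝ)
      = #P * ((∑ j, #(W j).offDiag : ℕ) / (N * (N - 1) : ℕ) : ℝ) := by
    have hnat : (∑ π ∈ P, subsetCount (fun j => (W j).image π) {x, y}) * (N * (N - 1))
        = (∑ j, #(W j).offDiag) * #P := by
      simp only [subsetCount, card_filter]
      rw [sum_comm, sum_mul, sum_mul]
      refine sum_congr rfl fun j _ => ?_
      rw [← card_filter, hP.card_filter_pair_subset_image_mul (W j) hxy]
    rw [mul_div_assoc', eq_div_iff hN, mul_comm (#P : ℝ)]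
    exact_mod_cast hnat
  have hjensen := pow_sum_div_card_le_sum_pow (s := P)
    (f := fun π => (subsetCount (fun j => (W j).image π) {x, y} : ℝ))
    (fun _ _ => Nat.cast_nonneg _) n
  rw [hsum, mul_pow, pow_succ' (#P : ℝ), mul_assoc, mul_div_assoc, mul_div_cancel_left₀ _
    (pow_ne_zero _ hP0)] at hjensen
  exact hjensen

end PairwiseIndep

theorem inv_two_pow_twelve_sub_le {t : ℝ} (ht : 1 ≤ t) :
    1 / 2 ^ 12 - 31 / t ≤ 1 / 4 * ((t - 1) / (4 * t)) ^ 5 := by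
  have hx : (t - 1) / (4 * t) = (1 - t⁻¹) / 4 := by field_simp
  have hbernoulli : 1 + 5 * -t⁻¹ ≤ (1 + -t⁻¹) ^ 5 :=
    one_add_mul_le_pow (by linarith [inv_le_one_of_one_le₀ ht]) 5
  rw [hx, div_eq_mul_inv 31]
  nlinarith [inv_pos.2 (zero_lt_one.trans_le ht)]

theorem density_eq_sum_memCount_sq_mul (m : ℕ) (E : Fin m → Finset (Finset (Fin (3 * m))))
    (W : Fin (2 * m + 1) → Finset (Fin (3 * m))) :
    density m E W = (∑ e, (memCount E e : ℝ) ^ 2 * (subsetCount W e : ℝ) ^ 5) /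
      ((m : ℝ) ^ 2 * (2 * (m : ℝ) + 1) ^ 5 * ((3 * m).choose 2 : ℝ)) := by
  rw [density]
  congr 1
  exact_mod_cast sum_card_inf_eq_sum_memCount_sq_mul_subsetCount_pow E W

theorem sum_memCount_sq_mul_le_mean_density (m : ℕ) (E : Fin m → Finset (Finset (Fin (3 * m))))
    (hE2 : ∀ i, ∀ e ∈ E i, e.card = 2) (V : Fin (2 * m + 1) → Finset (Fin (3 * m)))
    (P : Finset (Equiv.Perm (Fin (3 * m)))) (hP : PairwiseIndepPerms (3 * m) P) :
    (∑ e, (memCount E e : ℝ) ^ 2) *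
        ((∑ j, #(V j).offDiag : ℕ) / (3 * m * (3 * m - 1) : ℕ) : ℝ) ^ 5 /
        ((m : ℝ) ^ 2 * (2 * (m : ℝ) + 1) ^ 5 * ((3 * m).choose 2 : ℝ))
      ≤ (1 / (P.card : ℝ)) * ∑ π ∈ P, density m E fun j => (V j).image π := by
  set q : ℝ := (∑ j, #(V j).offDiag : ℕ) / (3 * m * (3 * m - 1) : ℕ)
  have hP0 : (#P : ℝ) ≠ 0 := by exact_mod_cast hP.1.card_pos.ne'
  have hpointwise : ∀ e, (memCount E e : ℝ) ^ 2 * (#P * q ^ 5)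
      ≤ ∑ π ∈ P, (memCount E e : ℝ) ^ 2 *
          (subsetCount (fun j => (V j).image π) e : ℝ) ^ 5 := by
    intro e
    rw [← mul_sum]
    obtain he | ⟨i, hi⟩ : memCount E e = 0 ∨ ∃ i, e ∈ E i := by
      simp [memCount, filter_eq_empty_iff, or_iff_not_imp_left]
    · simp [he]
    obtain ⟨x, y, hxy, rfl⟩ := card_eq_two.1 (hE2 i e hi)
    gcongr
    exact hP.pow_le_sum_subsetCount_pow V hxy 4
  simp only [density_eq_sum_memCount_sq_mul]
  set D : ℝ := (m : ℝ) ^ 2 * (2 * (m : ℝ) + 1) ^ 5 * ((3 * m).choose 2 : ℝ)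
  calc (∑ e, (memCount E e : ℝ) ^ 2) * q ^ 5 / D
      = 1 / #P * (∑ e, (memCount E e : ℝ) ^ 2 * (#P * q ^ 5)) / D := by
        rw [← sum_mul]; field_simp
    _ ≤ 1 / #P * (∑ e, ∑ π ∈ P, (memCount E e : ℝ) ^ 2 *
          (subsetCount (fun j => (V j).image π) e : ℝ) ^ 5) / D := by
        gcongr with e; exact hpointwise e
    _ = _ := by rw [sum_comm, mul_div_assoc, sum_div]

theorem sub_div_le_sum_card_offDiag_div (m : ℕ) (hm : 1 ≤ m)
    (V : Fin (2 * m + 1) → Finset (Fin (3 * m)))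
    (hVsum : (2 * (m : ℝ) + 1) * (3 * (m : ℝ) / 2) ≤ ∑ j, ((V j).card : ℝ)) :
    (3 * (m : ℝ) - 1 - 1) / (4 * (3 * m - 1))
      ≤ ((∑ j, #(V j).offDiag : ℕ) / (3 * m * (3 * m - 1) : ℕ) : ℝ) / (2 * m + 1) := by
  have hm1 : (1 : ℝ) ≤ m := by exact_mod_cast hm
  have hV : (2 * (m : ℝ) + 1) * (3 * m / 2) * (3 * m / 2 - 1) ≤ ∑ j, (#(V j).offDiag : ℝ) := by
    simpa using mul_mul_sub_one_le_sum_card_offDiag V (s := 3 * m / 2) (by linarith)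
      (by simpa using hVsum)
  have h3m : (0 : ℝ) < 3 * m - 1 := by linarith
  rw [Nat.cast_mul, Nat.cast_sub (by omega), div_div, div_le_div_iff₀ (by positivity)
    (by push_cast; positivity)]
  push_cast
  nlinarith

/-- Let `m ≥ 1` and fix a partition datum `(E,V)` on `{1,…,3m}` with
`Σᵢ |Eᵢ| ≥ (m/2)·C(3m,2)` and `Σⱼ |Vⱼ| ≥ (2m+1)·(3m/2)`.  Let `Π` be a pairwise
independent set of permutations of `{1,…,3m}`.  Then
`(1/|Π|) Σ_{π ∈ Π} δ(E, πV) ≥ 2⁻¹² − 31/(3m−1)`, where `πV` is the family `j ↦ π(Vⱼ)`. -/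
theorem stmt6 (m : ℕ) (hm : 1 ≤ m)
    (E : Fin m → Finset (Finset (Fin (3 * m))))
    (hE2 : ∀ i, ∀ e ∈ E i, e.card = 2)
    (V : Fin (2 * m + 1) → Finset (Fin (3 * m)))
    (hEsum : ((m : ℝ) / 2) * ((3 * m).choose 2 : ℝ) ≤ ∑ i, ((E i).card : ℝ))
    (hVsum : (2 * (m : ℝ) + 1) * (3 * (m : ℝ) / 2) ≤ ∑ j, ((V j).card : ℝ))
    (P : Finset (Equiv.Perm (Fin (3 * m)))) (hP : PairwiseIndepPerms (3 * m) P) :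
    (1 / 2 ^ 12 : ℝ) - 31 / (3 * (m : ℝ) - 1) ≤
      (1 / (P.card : ℝ)) * ∑ π ∈ P, density m E fun j => (V j).image π := by
  have hm1 : (1 : ℝ) ≤ m := by exact_mod_cast hm
  have hC : (0 : ℝ) < (3 * m).choose 2 := by exact_mod_cast Nat.choose_pos (by omega)
  have hE : ((m : ℝ) / 2 * (3 * m).choose 2) ^ 2
      ≤ (3 * m).choose 2 * ∑ e, (memCount E e : ℝ) ^ 2 := by
    have := sq_sum_card_le_choose_mul_sum_memCount_sq E hE2
    rw [Fintype.card_fin] at this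
    exact (pow_le_pow_left₀ (by positivity) hEsum 2).trans (by exact_mod_cast this)
  have hq0 : 0 ≤ (3 * (m : ℝ) - 1 - 1) / (4 * (3 * m - 1)) :=
    div_nonneg (by linarith) (by linarith)
  set q : ℝ := (∑ j, #(V j).offDiag : ℕ) / (3 * m * (3 * m - 1) : ℕ)
  calc (1 / 2 ^ 12 : ℝ) - 31 / (3 * (m : ℝ) - 1)
      ≤ 1 / 4 * ((3 * (m : ℝ) - 1 - 1) / (4 * (3 * m - 1))) ^ 5 :=
        inv_two_pow_twelve_sub_le (by linarith)
    _ ≤ 1 / 4 * (q / (2 * m + 1)) ^ 5 := by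
        gcongr 1 / 4 * ?_ ^ 5; exact sub_div_le_sum_card_offDiag_div m hm V hVsum
    _ = ((m : ℝ) / 2 * (3 * m).choose 2) ^ 2 / (3 * m).choose 2 * q ^ 5 /
          ((m : ℝ) ^ 2 * (2 * (m : ℝ) + 1) ^ 5 * ((3 * m).choose 2 : ℝ)) := by
        field_simp; ring
    _ ≤ (∑ e, (memCount E e : ℝ) ^ 2) * q ^ 5 /
          ((m : ℝ) ^ 2 * (2 * (m : ℝ) + 1) ^ 5 * ((3 * m).choose 2 : ℝ)) := by
        gcongr; rwa [div_le_iff₀' hC]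
    _ ≤ _ := sum_memCount_sq_mul_le_mean_density m E hE2 V P hP
end

section
/- Let δ ∈ (0,1] and let m be an integer with m ≥ 3/δ. Let (E,V) be a partition datum on {1,…,3m} with δ(E,V) ≥ δ, and define N3 and G with parameter δ. Then |G| ≥ (δ/12) · m. -/
open scoped Classical

/-- `N3(i)`: the triples `(j₁,j₂,j₃)` of pairwise distinct indices with
`|E_i[V_{j₁} ∩ V_{j₂} ∩ V_{j₃}]| ≥ (δ/3)·C(3m,2)`. -/
noncomputable def N3 (m : ℕ) (E : Fin m → Finset (Finset (Fin (3 * m))))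
    (V : Fin (2 * m + 1) → Finset (Fin (3 * m))) (δ : ℝ) (i : Fin m) :
    Finset (Fin (2 * m + 1) × Fin (2 * m + 1) × Fin (2 * m + 1)) :=
  Finset.univ.filter fun j =>
    j.1 ≠ j.2.1 ∧ j.2.1 ≠ j.2.2 ∧ j.1 ≠ j.2.2 ∧
      (δ / 3) * ((3 * m).choose 2 : ℝ) ≤
        (((E i).filter fun e => e ⊆ V j.1 ∩ V j.2.1 ∩ V j.2.2).card : ℝ)

/-- `G`: the set of `i ∈ [m]` with `|N3(i)| ≥ (δ/12)·(2m+1)³`. -/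
noncomputable def Gset (m : ℕ) (E : Fin m → Finset (Finset (Fin (3 * m))))
    (V : Fin (2 * m + 1) → Finset (Fin (3 * m))) (δ : ℝ) : Finset (Fin m) :=
  Finset.univ.filter fun i => (δ / 12) * (2 * (m : ℝ) + 1) ^ 3 ≤ ((N3 m E V δ i).card : ℝ)

/-!
Bounding each five-fold intersection in the density by `E_{i₁}[V_{j₁} ∩ V_{j₂} ∩ V_{j₃}]` turns
the hypothesis into `∑ᵢ ∑_{j₁j₂j₃} |E_i[V_{j₁} ∩ V_{j₂} ∩ V_{j₃}]| ≥ δ m (2m+1)³ C(3m,2)`.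
Each term is at most `C(3m,2)` since the `E_i` consist of pairs; triples with a repeated index
(at most `3(2m+1)²` of them, and `3/(2m+1) ≤ δ/2`) and distinct triples outside `N3(i)` (each
below `δ/3 · C(3m,2)`) contribute at most `(δ/2 + δ/3) m (2m+1)³ C(3m,2)`. Hence
`∑ᵢ |N3(i)| ≥ (δ/6) m (2m+1)³`, and since `|N3(i)| ≤ (2m+1)³`, averaging over `i` gives
`|G| ≥ δm/12`.
-/

open Finset

theorem Finset.sum_le_card_filter_mul_add_card_mul {ι R : Type*} [CommRing R] [LinearOrder R]
    [IsStrictOrderedRing R] (s : Finset ι) (f : ι → R) {U τ : R} (hU : ∀ i ∈ s, f i ≤ U)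
    (hτ : 0 ≤ τ) :
    ∑ i ∈ s, f i ≤ #(s.filter fun i => τ ≤ f i) * U + #s * τ := by
  have hlarge : ∑ i ∈ s.filter (τ ≤ f ·), f i ≤ #(s.filter (τ ≤ f ·)) * U := by
    simpa using sum_le_card_nsmul (s.filter (τ ≤ f ·)) f U fun i hi => hU i (mem_filter.1 hi).1
  have hsmall : ∑ i ∈ s.filter (¬τ ≤ f ·), f i ≤ #s * τ :=
    calc ∑ i ∈ s.filter (¬τ ≤ f ·), f i ≤ (#(s.filter (¬τ ≤ f ·)) : R) * τ := by
          simpa using sum_le_card_nsmul (s.filter (¬τ ≤ f ·)) f τ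
            fun i hi => (not_le.1 (mem_filter.1 hi).2).le
      _ ≤ #s * τ := by gcongr; exact filter_subset _ _
  linarith [sum_filter_add_sum_filter_not s (τ ≤ f ·) f]

def finFiveArrowEquiv (α : Type*) : (Fin 5 → α) ≃ (α × α × α) × (α × α) where
  toFun j := ((j 0, j 1, j 2), (j 3, j 4))
  invFun p := ![p.1.1, p.1.2.1, p.1.2.2, p.2.1, p.2.2]
  left_inv j := by funext k; fin_cases k <;> rfl
  right_inv _ := rfl

theorem sum_fin_five_arrow_eq {α M : Type*} [Fintype α] [AddCommMonoid M] (f : α × α × α → M) :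
    ∑ j : Fin 5 → α, f (j 0, j 1, j 2) = Fintype.card α ^ 2 • ∑ t, f t := by
  calc ∑ j : Fin 5 → α, f (j 0, j 1, j 2) = ∑ p : (α × α × α) × (α × α), f p.1 :=
        (finFiveArrowEquiv α).sum_comp fun p => f p.1
    _ = Fintype.card α ^ 2 • ∑ t, f t := by
        simp only [Fintype.sum_prod_type, sum_const, card_univ, Fintype.card_prod, ← sq,
          ← smul_sum]

def distinctTriples (α : Type*) [Fintype α] [DecidableEq α] : Finset (α × α × α) :=
  univ.filter fun t => t.1 ≠ t.2.1 ∧ t.2.1 ≠ t.2.2 ∧ t.1 ≠ t.2.2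

theorem card_compl_distinctTriples_le (α : Type*) [Fintype α] [DecidableEq α] :
    #(distinctTriples α)ᶜ ≤ 3 * Fintype.card α ^ 2 := by
  let diag (g : α × α → α × α × α) := univ.image g
  have hcover : (distinctTriples α)ᶜ ⊆ diag (fun p => (p.1, p.1, p.2)) ∪
      diag (fun p => (p.1, p.2, p.2)) ∪ diag (fun p => (p.1, p.2, p.1)) := by
    rintro ⟨a, b, c⟩ h
    simp only [distinctTriples, compl_filter, mem_filter, mem_univ, true_and, not_and_or,
      not_not] at h
    rcases h with rfl | rfl | rfl <;> simp [diag]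
  have hdiag (g : α × α → α × α × α) : #(diag g) ≤ Fintype.card α ^ 2 :=
    card_image_le.trans (by simp [sq])
  calc #(distinctTriples α)ᶜ ≤ _ := card_le_card hcover
    _ ≤ _ := (card_union_le _ _).trans (add_le_add_left (card_union_le _ _) _)
    _ ≤ 3 * Fintype.card α ^ 2 := by
      have := hdiag fun p => (p.1, p.1, p.2)
      have := hdiag fun p => (p.1, p.2, p.2)
      have := hdiag fun p => (p.1, p.2, p.1)
      omega

section PartitionDatum

variable {m : ℕ} (E : Fin m → Finset (Finset (Fin (3 * m))))
  (V : Fin (2 * m + 1) → Finset (Fin (3 * m)))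

noncomputable def tripleCount (i : Fin m)
    (t : Fin (2 * m + 1) × Fin (2 * m + 1) × Fin (2 * m + 1)) : ℕ :=
  #((E i).filter fun e => e ⊆ V t.1 ∩ V t.2.1 ∩ V t.2.2)

theorem tripleCount_le_choose (hE2 : ∀ i, ∀ e ∈ E i, e.card = 2) (i : Fin m)
    (t : Fin (2 * m + 1) × Fin (2 * m + 1) × Fin (2 * m + 1)) :
    tripleCount E V i t ≤ (3 * m).choose 2 := by
  unfold tripleCount
  simpa using Set.Sized.card_le (r := 2) fun e he => hE2 i e (mem_filter.1 he).1

theorem card_inf_le_tripleCount (i : Fin m × Fin m) (j : Fin 5 → Fin (2 * m + 1)) :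
    #(univ.inf fun k : Fin 5 =>
        ((E i.1).filter fun e => e ⊆ V (j k)) ∩ ((E i.2).filter fun e => e ⊆ V (j k))) ≤
      tripleCount E V i.1 (j 0, j 1, j 2) := by
  refine card_le_card fun e he => ?_
  have hmem (k : Fin 5) : e ∈ E i.1 ∧ e ⊆ V (j k) := by
    have := inf_le (f := fun k : Fin 5 =>
      ((E i.1).filter fun e => e ⊆ V (j k)) ∩ ((E i.2).filter fun e => e ⊆ V (j k)))
      (mem_univ k) he
    simp only [mem_inter, mem_filter] at this
    exact this.1
  simp only [mem_filter, subset_inter_iff]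
  exact ⟨(hmem 0).1, ⟨(hmem 0).2, (hmem 1).2⟩, (hmem 2).2⟩

theorem density_mul_le_sum_tripleCount (hm : 0 < m) :
    density m E V * (m * (2 * m + 1) ^ 3 * (3 * m).choose 2) ≤
      ∑ i, ∑ t, (tripleCount E V i t : ℝ) := by
  have hC : (0 : ℝ) < (3 * m).choose 2 := by exact_mod_cast Nat.choose_pos (by omega)
  have hfive (i : Fin m) :
      ∑ j : Fin 5 → Fin (2 * m + 1), (tripleCount E V i (j 0, j 1, j 2) : ℝ) =
        (2 * m + 1) ^ 2 * ∑ t, (tripleCount E V i t : ℝ) := by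
    rw [sum_fin_five_arrow_eq fun t => (tripleCount E V i t : ℝ), nsmul_eq_mul]
    simp
  have hsum : ∑ i : Fin m × Fin m, ∑ j : Fin 5 → Fin (2 * m + 1),
      (#(univ.inf fun k : Fin 5 =>
        ((E i.1).filter fun e => e ⊆ V (j k)) ∩ ((E i.2).filter fun e => e ⊆ V (j k))) : ℝ) ≤
      m * (2 * m + 1) ^ 2 * ∑ i, ∑ t, (tripleCount E V i t : ℝ) :=
    calc _ ≤ ∑ i : Fin m × Fin m, ∑ j : Fin 5 → Fin (2 * m + 1),
          (tripleCount E V i.1 (j 0, j 1, j 2) : ℝ) := by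
          gcongr with i _ j _
          exact_mod_cast card_inf_le_tripleCount E V i j
      _ = m * (2 * m + 1) ^ 2 * ∑ i, ∑ t, (tripleCount E V i t : ℝ) := by
          simp only [hfive, Fintype.sum_prod_type, sum_const, card_univ, Fintype.card_fin,
            nsmul_eq_mul, ← mul_sum]
          ring
  rw [density, div_mul_eq_mul_div, div_le_iff₀ (by positivity)]
  calc _ ≤ (m * (2 * m + 1) ^ 2 * ∑ i, ∑ t, (tripleCount E V i t : ℝ)) *
        (m * (2 * m + 1) ^ 3 * (3 * m).choose 2) := by gcongr
    _ = _ := by ring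

theorem filter_distinctTriples_eq_N3 (δ : ℝ) (i : Fin m) :
    (distinctTriples _).filter (fun t => δ / 3 * (3 * m).choose 2 ≤ (tripleCount E V i t : ℝ)) =
      N3 m E V δ i := by
  ext t
  simp [distinctTriples, N3, tripleCount, and_assoc]

theorem sum_tripleCount_le (hE2 : ∀ i, ∀ e ∈ E i, e.card = 2) {δ : ℝ} (hδ : 0 ≤ δ)
    (i : Fin m) :
    ∑ t, (tripleCount E V i t : ℝ) ≤
      ((3 * m).choose 2 : ℝ) *
        (#(N3 m E V δ i) + 3 * (2 * m + 1) ^ 2 + δ / 3 * (2 * m + 1) ^ 3) := by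
  have hle (t) : (tripleCount E V i t : ℝ) ≤ (3 * m).choose 2 := by
    exact_mod_cast tripleCount_le_choose E V hE2 i t
  have hdistinct := sum_le_card_filter_mul_add_card_mul (distinctTriples _)
    (fun t => (tripleCount E V i t : ℝ)) (fun t _ => hle t)
    (τ := δ / 3 * (3 * m).choose 2) (by positivity)
  rw [filter_distinctTriples_eq_N3] at hdistinct
  have hrest : ∑ t ∈ (distinctTriples (Fin (2 * m + 1)))ᶜ, (tripleCount E V i t : ℝ) ≤
      #(distinctTriples (Fin (2 * m + 1)))ᶜ * (3 * m).choose 2 := by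
    simpa using sum_le_card_nsmul _ _ _ fun t _ => hle t
  have hcompl : (#(distinctTriples (Fin (2 * m + 1)))ᶜ : ℝ) ≤ 3 * (2 * m + 1) ^ 2 := by
    exact_mod_cast (card_compl_distinctTriples_le _).trans_eq (by simp)
  have hcard : (#(distinctTriples (Fin (2 * m + 1))) : ℝ) ≤ (2 * m + 1) ^ 3 := by
    exact_mod_cast (card_le_univ _).trans_eq (by simp; ring)
  rw [← sum_add_sum_compl (distinctTriples _)]
  have hC : (0 : ℝ) ≤ (3 * m).choose 2 := by positivity
  linarith [mul_le_mul_of_nonneg_right hcompl hC,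
    mul_le_mul_of_nonneg_right hcard (by positivity : (0 : ℝ) ≤ δ / 3 * (3 * m).choose 2)]

theorem sum_card_N3_le_card_Gset {δ : ℝ} (hδ : 0 ≤ δ) :
    ∑ i, (#(N3 m E V δ i) : ℝ) ≤
      #(Gset m E V δ) * (2 * m + 1) ^ 3 + m * (δ / 12 * (2 * m + 1) ^ 3) := by
  have hN3 (i : Fin m) : (#(N3 m E V δ i) : ℝ) ≤ (2 * m + 1) ^ 3 := by
    exact_mod_cast (card_le_univ _).trans_eq (by simp; ring)
  simpa [Gset] using sum_le_card_filter_mul_add_card_mul univ (fun i => (#(N3 m E V δ i) : ℝ))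
    (fun i _ => hN3 i) (τ := δ / 12 * (2 * m + 1) ^ 3) (by positivity)

end PartitionDatum

theorem stmt7_general (δ : ℝ) (hδ0 : 0 < δ) (m : ℕ) (hm : 3 / δ ≤ (m : ℝ))
    (E : Fin m → Finset (Finset (Fin (3 * m))))
    (hE2 : ∀ i, ∀ e ∈ E i, e.card = 2)
    (V : Fin (2 * m + 1) → Finset (Fin (3 * m)))
    (hdens : δ ≤ density m E V) :
    (δ / 12) * (m : ℝ) ≤ ((Gset m E V δ).card : ℝ) := by
  have hmδ : 3 ≤ m * δ := (div_le_iff₀ hδ0).1 hm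
  have hm0 : 0 < m := by
    have : (0 : ℝ) < m := pos_of_mul_pos_left (by linarith) hδ0.le
    exact_mod_cast this
  have hC : (0 : ℝ) < (3 * m).choose 2 := by exact_mod_cast Nat.choose_pos (by omega)
  set C : ℝ := ↑((3 * m).choose 2)
  set N : ℝ := 2 * m + 1
  have hcount : C * (δ * m * N ^ 3) ≤
      C * (∑ i, (#(N3 m E V δ i) : ℝ) + m * (3 * N ^ 2 + δ / 3 * N ^ 3)) :=
    calc C * (δ * m * N ^ 3) ≤ density m E V * (m * N ^ 3 * C) := by
          rw [mul_comm C, ← mul_assoc, mul_assoc δ]; gcongr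
      _ ≤ ∑ i, ∑ t, (tripleCount E V i t : ℝ) := density_mul_le_sum_tripleCount E V hm0
      _ ≤ ∑ i, C * (#(N3 m E V δ i) + 3 * N ^ 2 + δ / 3 * N ^ 3) :=
          sum_le_sum fun i _ => sum_tripleCount_le E V hE2 hδ0.le i
      _ = C * (∑ i, (#(N3 m E V δ i) : ℝ) + m * (3 * N ^ 2 + δ / 3 * N ^ 3)) := by
          simp only [← mul_sum, sum_add_distrib, sum_const, card_univ, Fintype.card_fin,
            nsmul_eq_mul]
          ring
  have hN3 := le_of_mul_le_mul_left hcount hC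
  have hG := sum_card_N3_le_card_Gset E V hδ0.le
  have hN : 0 < N := by positivity
  have hδN : 6 ≤ δ * N := by nlinarith
  have hcollisions : 3 * N ^ 2 ≤ δ / 2 * N ^ 3 := by nlinarith [sq_nonneg N]
  have hmain : (δ / 12 * m) * N ^ 3 ≤ #(Gset m E V δ) * N ^ 3 := by
    nlinarith [mul_le_mul_of_nonneg_left hcollisions (Nat.cast_nonneg (α := ℝ) m)]
  exact le_of_mul_le_mul_right hmain (by positivity)

/-- Let `δ ∈ (0,1]` and `m ≥ 3/δ` an integer.  Let `(E,V)` be a partition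
datum on `{1,…,3m}` with `δ(E,V) ≥ δ`, and define `N3` and `G` with parameter `δ`.  Then
`|G| ≥ (δ/12)·m`. -/
theorem stmt7 (δ : ℝ) (hδ0 : 0 < δ) (hδ1 : δ ≤ 1) (m : ℕ) (hm : 3 / δ ≤ (m : ℝ))
    (E : Fin m → Finset (Finset (Fin (3 * m))))
    (hE2 : ∀ i, ∀ e ∈ E i, e.card = 2)
    (V : Fin (2 * m + 1) → Finset (Fin (3 * m)))
    (hdens : δ ≤ density m E V) :
    (δ / 12) * (m : ℝ) ≤ ((Gset m E V δ).card : ℝ) :=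
  stmt7_general δ hδ0 m hm E hE2 V hdens
end

section
/- Let δ ∈ (0,1], let γ ≥ 0 be real, and let m be an integer with m ≥ 450/δ^2. Let E be a set of 2-element subsets of {1,…,3m} with |E| ≥ (δ/3) · C(3m,2), and let W ⊆ {1,…,3m} with |W| ≤ 3γm. Then |K12(E) \ tm(W)| ≥ (δ^2/10 − 3γ) · (3m)^3. -/
/-- `K12(E')`: the triples `(u,v,w) ∈ {1,…,3m}³` with `v ≠ w`, `{u,v} ∈ E'` and
`{u,w} ∈ E'`. -/
def K12 (m : ℕ) (E : Finset (Finset (Fin (3 * m)))) :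
    Finset (Fin (3 * m) × Fin (3 * m) × Fin (3 * m)) :=
  Finset.univ.filter fun t =>
    t.2.1 ≠ t.2.2 ∧ ({t.1, t.2.1} : Finset (Fin (3 * m))) ∈ E ∧
      ({t.1, t.2.2} : Finset (Fin (3 * m))) ∈ E

/-- `tm(W)`: the triples `(u,v,w) ∈ {1,…,3m}³` with `{u,v,w} ∩ W ≠ ∅`. -/
def tmSet (m : ℕ) (W : Finset (Fin (3 * m))) :
    Finset (Fin (3 * m) × Fin (3 * m) × Fin (3 * m)) :=
  Finset.univ.filter fun t => ({t.1, t.2.1, t.2.2} : Finset (Fin (3 * m))) ∩ W ≠ ∅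

/-! Write `d u` for the number of edges at `u`.  Counting ordered pairs of distinct neighbours,
`|K12(E)| = ∑ d u ^ 2 - ∑ d u`, and since `∑ d u = 2|E|`, Cauchy–Schwarz gives
`|K12(E)| ≥ (2|E|)² / 3m - 2|E| ≥ δ²m(3m-1)²/3 - 9m²`.  Each vertex of `W` lies on at most
`3 (3m)²` triples, so removing `tm(W)` costs at most `81γm³`; the hypothesis `δ²m ≥ 450`
absorbs the lower-order terms. -/

open Finset

section Cherries

variable {V : Type*} [Fintype V] [DecidableEq V]

def neighbors (E : Finset (Finset V)) (u : V) : Finset V := {v | {u, v} ∈ E}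

def cherries (E : Finset (Finset V)) : Finset (V × V × V) :=
  {t | t.2.1 ≠ t.2.2 ∧ {t.1, t.2.1} ∈ E ∧ {t.1, t.2.2} ∈ E}

def meeting (W : Finset V) : Finset (V × V × V) :=
  {t | {t.1, t.2.1, t.2.2} ∩ W ≠ ∅}

omit [Fintype V] in
lemma exists_eq_pair_of_card_eq_two {e : Finset V} {u : V} (he : #e = 2) (hu : u ∈ e) :
    ∃ v, e = {u, v} := by
  obtain ⟨v, hv⟩ := card_eq_one.1 (by rw [card_erase_of_mem hu, he] : #(e.erase u) = 1)
  exact ⟨v, by rw [← insert_erase hu, hv]⟩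

lemma card_neighbors {E : Finset (Finset V)} (hE : ∀ e ∈ E, #e = 2) (u : V) :
    #(neighbors E u) = #{e ∈ E | u ∈ e} := by
  have hne : ∀ v ∈ neighbors E u, v ≠ u := by
    rintro v hv rfl
    simpa using hE _ (mem_filter.1 hv).2
  refine card_bij (fun v _ => {u, v}) (fun v hv => ?_) (fun v hv w hw h => ?_) (fun e he => ?_)
  · simpa [neighbors] using (mem_filter.1 hv).2
  · have : w ∈ ({u, v} : Finset V) := h ▸ mem_insert_of_mem (mem_singleton_self w)
    exact (by simpa [hne w hw] using this : w = v).symm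
  · obtain ⟨heE, hu⟩ := mem_filter.1 he
    obtain ⟨v, rfl⟩ := exists_eq_pair_of_card_eq_two (hE _ heE) hu
    exact ⟨v, by simpa [neighbors] using heE, rfl⟩

lemma sum_card_neighbors {E : Finset (Finset V)} (hE : ∀ e ∈ E, #e = 2) :
    ∑ u, #(neighbors E u) = 2 * #E := by
  simp_rw [card_neighbors hE]
  have := sum_card_bipartiteAbove_eq_sum_card_bipartiteBelow (s := univ) (t := E) (· ∈ ·)
  simp only [bipartiteAbove, bipartiteBelow, filter_univ_mem] at this
  rw [this, sum_congr rfl hE, sum_const, smul_eq_mul, mul_comm]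

lemma two_mul_card_le {E : Finset (Finset V)} (hE : ∀ e ∈ E, #e = 2) :
    2 * #E ≤ Fintype.card V ^ 2 := by
  rw [← sum_card_neighbors hE, sq, ← smul_eq_mul, ← card_univ]
  exact sum_le_card_nsmul _ _ _ fun u _ => card_le_univ _

lemma card_cherries (E : Finset (Finset V)) :
    #(cherries E) = ∑ u, #(neighbors E u).offDiag := by
  rw [cherries, card_filter, Fintype.sum_prod_type]
  refine sum_congr rfl fun u _ => ?_
  rw [← card_filter]
  congr 1
  ext ⟨v, w⟩
  simp only [ne_eq, mem_filter, mem_univ, true_and, neighbors, mem_offDiag]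
  tauto

lemma sq_div_sub_le_card_cherries {E : Finset (Finset V)} (hE : ∀ e ∈ E, #e = 2) :
    (2 * #E : ℝ) ^ 2 / Fintype.card V - 2 * #E ≤ #(cherries E) := by
  have hsum : (2 * #E : ℝ) = ∑ u, (#(neighbors E u) : ℝ) := by
    exact_mod_cast (sum_card_neighbors hE).symm
  have hcherries : (#(cherries E) : ℝ) = ∑ u, (#(neighbors E u) : ℝ) ^ 2 - 2 * #E := by
    rw [hsum, ← sum_sub_distrib, card_cherries, Nat.cast_sum]
    refine sum_congr rfl fun u _ => ?_
    rw [offDiag_card, Nat.cast_sub (Nat.le_mul_self _)]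
    push_cast
    ring
  have hCS : (2 * #E : ℝ) ^ 2 / Fintype.card V ≤ ∑ u, (#(neighbors E u) : ℝ) ^ 2 := by
    refine div_le_of_le_mul₀ (Nat.cast_nonneg _) (sum_nonneg fun u _ => sq_nonneg _) ?_
    rw [hsum, mul_comm]
    simpa using sq_sum_le_card_mul_sum_sq (s := univ) (f := fun u => (#(neighbors E u) : ℝ))
  linarith

lemma card_meeting_le (W : Finset V) :
    #(meeting W) ≤ 3 * #W * Fintype.card V ^ 2 := by
  calc #(meeting W)
      ≤ #(W ×ˢ (univ ×ˢ univ) ∪ univ ×ˢ (W ×ˢ univ) ∪ univ ×ˢ (univ ×ˢ W)) := by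
        refine card_le_card fun t ht => ?_
        simp only [meeting, mem_filter, mem_univ, true_and, ← nonempty_iff_ne_empty] at ht
        obtain ⟨x, hx, hxW⟩ := ht.exists_mem.imp fun x => mem_inter.1
        simp only [mem_insert, mem_singleton] at hx
        rcases hx with rfl | rfl | rfl <;> simp [hxW]
    _ ≤ #(W ×ˢ (univ ×ˢ univ)) + #(univ ×ˢ (W ×ˢ univ)) + #(univ ×ˢ (univ ×ˢ W)) :=
        (card_union_le _ _).trans (Nat.add_le_add_right (card_union_le _ _) _)
    _ = 3 * #W * Fintype.card V ^ 2 := by simp only [card_product, card_univ]; ring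

end Cherries

lemma cube_le_of_density {δ M S : ℝ} (hδ0 : 0 < δ) (hδ1 : δ ≤ 1) (hM : 450 ≤ δ ^ 2 * M)
    (hS : δ * M * (3 * M - 1) ≤ S) :
    δ ^ 2 / 10 * (3 * M) ^ 3 ≤ S ^ 2 / (3 * M) - 9 * M ^ 2 := by
  have hδ2 : δ ^ 2 ≤ 1 := pow_le_one₀ hδ0.le hδ1
  have hMpos : 0 < M := pos_of_mul_pos_right (by linarith) (sq_nonneg δ)
  have hM0 : 450 ≤ M := hM.trans (mul_le_of_le_one_left hMpos.le hδ2)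
  have hsq : δ ^ 2 * M * (3 * M - 1) ^ 2 / 3 ≤ S ^ 2 / (3 * M) := by
    rw [div_le_div_iff₀ (by norm_num) (by positivity)]
    have h0 : 0 ≤ δ * M * (3 * M - 1) := mul_nonneg (by positivity) (by linarith)
    nlinarith [mul_self_le_mul_self h0 hS]
  nlinarith [mul_le_mul_of_nonneg_right hM (sq_nonneg M),
    mul_le_mul_of_nonneg_right hδ2 (sq_nonneg M), mul_nonneg (sq_nonneg δ) hMpos.le]

theorem stmt8_general (δ γ : ℝ) (hδ0 : 0 < δ) (hδ1 : δ ≤ 1)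
    (m : ℕ) (hm : 450 / δ ^ 2 ≤ (m : ℝ))
    (E : Finset (Finset (Fin (3 * m)))) (hE2 : ∀ e ∈ E, e.card = 2)
    (hE : (δ / 3) * ((3 * m).choose 2 : ℝ) ≤ (E.card : ℝ))
    (W : Finset (Fin (3 * m))) (hW : (W.card : ℝ) ≤ 3 * γ * (m : ℝ)) :
    (δ ^ 2 / 10 - 3 * γ) * (3 * (m : ℝ)) ^ 3 ≤ ((K12 m E \ tmSet m W).card : ℝ) := by
  -- `K12 m E` and `tmSet m W` unfold to `cherries E` and `meeting W` on `Fin (3 * m)`.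
  change _ ≤ (#(cherries E \ meeting W) : ℝ)
  have hm' : 450 ≤ δ ^ 2 * m := by rwa [div_le_iff₀' (by positivity)] at hm
  have hS : δ * m * (3 * m - 1) ≤ (2 * #E : ℝ) := by
    rw [Nat.cast_choose_two] at hE
    push_cast at hE
    linarith
  have hK : (2 * #E : ℝ) ^ 2 / (3 * m) - 2 * #E ≤ #(cherries E) := by
    simpa using sq_div_sub_le_card_cherries hE2
  have hEle : (2 * #E : ℝ) ≤ 9 * m ^ 2 := by
    have := two_mul_card_le hE2
    simp only [Fintype.card_fin] at this
    exact_mod_cast this.trans_eq (by ring)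
  have hT : (#(meeting W) : ℝ) ≤ 81 * γ * m ^ 3 := by
    have := card_meeting_le W
    simp only [Fintype.card_fin] at this
    have h : (#(meeting W) : ℝ) ≤ 3 * #W * (3 * m) ^ 2 := by exact_mod_cast this
    linarith [mul_le_mul_of_nonneg_right hW (sq_nonneg (m : ℝ))]
  have hsdiff : (#(cherries E) : ℝ) ≤ #(cherries E \ meeting W) + #(meeting W) := by
    exact_mod_cast card_le_card_sdiff_add_card
  linarith [cube_le_of_density hδ0 hδ1 hm' hS]

/-- Let `δ ∈ (0,1]`, `γ ≥ 0`, and `m ≥ 450/δ²` an integer.  Let `E` be a set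
of 2-element subsets of `{1,…,3m}` with `|E| ≥ (δ/3)·C(3m,2)`, and `W ⊆ {1,…,3m}` with
`|W| ≤ 3γm`.  Then `|K12(E) \ tm(W)| ≥ (δ²/10 − 3γ)·(3m)³`. -/
theorem stmt8 (δ γ : ℝ) (hδ0 : 0 < δ) (hδ1 : δ ≤ 1) (hγ : 0 ≤ γ)
    (m : ℕ) (hm : 450 / δ ^ 2 ≤ (m : ℝ))
    (E : Finset (Finset (Fin (3 * m)))) (hE2 : ∀ e ∈ E, e.card = 2)
    (hE : (δ / 3) * ((3 * m).choose 2 : ℝ) ≤ (E.card : ℝ))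
    (W : Finset (Fin (3 * m))) (hW : (W.card : ℝ) ≤ 3 * γ * (m : ℝ)) :
    (δ ^ 2 / 10 - 3 * γ) * (3 * (m : ℝ)) ^ 3 ≤ ((K12 m E \ tmSet m W).card : ℝ) :=
  stmt8_general δ γ hδ0 hδ1 m hm E hE2 hE W hW
end

section
/- Let X_1,…,X_t be finite nonempty sets and let (S,F) be a DDWB process on X_1 × ⋯ × X_t with distribution π and with blockage bound ≤ β. Let i_1 < ⋯ < i_k be indices in {1,…,t} and let f : X_1 × ⋯ × X_t → [0,1] be a function that depends only on the coordinates i_1,…,i_k (that is, f(a) = f(b) whenever a and b agree on these coordinates). Assume that for every tuple a with f(a) > 0 and every j ∈ {1,…,k}, a_{i_j} ∈ S_{i_j}(a_1,…,a_{i_j−1}). Then Σ_a π(a) · f(a) ≥ (Σ_a f(a)) / (|X_1| ⋯ |X_t|) − k · β. -/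
/-!
Interpolate between the uniform distribution and `π` through the hybrids `w_m` in which the
coordinates `< m` are drawn by the process and those `≥ m` uniformly. Going from `w_m` to
`w_{m+1}` only changes how coordinate `m` is drawn given the others: uniformly from `X_m`, or
uniformly from `S_m \ F_m`. For `m ∉ I` the conditional expectation of `f` does not change,
since `f` ignores coordinate `m`. For `m ∈ I`, `f` vanishes off `S_m`, so the average of `f` over
`S_m \ F_m` is at least its average over `X_m` minus `|F_m| / |S_m| ≤ β`. Summing the losses
over the `k` coordinates of `I` gives the bound.
-/

/-- The maps `S i`, `F i` are required, in theorems using this, to depend only on the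
coordinates `< i`, so this agrees with the usual definition in terms of prefixes. -/
noncomputable def ddwbMass {t : ℕ} {X : Fin t → Type*} [∀ i, Fintype (X i)]
    [∀ i, DecidableEq (X i)]
    (S F : ∀ i : Fin t, (∀ j : Fin t, X j) → Finset (X i)) (a : ∀ j : Fin t, X j) : ℝ :=
  ∏ i, if a i ∈ S i a \ F i a then (((S i a \ F i a).card : ℝ))⁻¹ else 0

open Finset Function
open scoped BigOperators

noncomputable def unifOn {α : Type*} [DecidableEq α] (s : Finset α) (x : α) : ℝ :=
  if x ∈ s then (#s : ℝ)⁻¹ else 0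

section unifOn

variable {α : Type*} [DecidableEq α]

lemma unifOn_nonneg (s : Finset α) (x : α) : 0 ≤ unifOn s x := by
  unfold unifOn; split <;> positivity

variable [Fintype α]

lemma unifOn_univ (x : α) : unifOn univ x = (Fintype.card α : ℝ)⁻¹ := by
  simp [unifOn]

lemma sum_unifOn_mul (s : Finset α) (φ : α → ℝ) : ∑ x, unifOn s x * φ x = 𝔼 x ∈ s, φ x := by
  simp only [unifOn, ite_mul, zero_mul, sum_ite_mem, univ_inter, expect_eq_sum_div_card,
    sum_div, inv_mul_eq_div]

lemma expect_sub_le_expect_sdiff {s b : Finset α} {β : ℝ} (hne : (s \ b).Nonempty)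
    (hb : (#b : ℝ) ≤ β * #s) {φ : α → ℝ} (hφ0 : ∀ x, 0 ≤ φ x) (hφ1 : ∀ x, φ x ≤ 1)
    (hφs : ∀ x ∉ s, φ x = 0) :
    𝔼 x, φ x - β ≤ 𝔼 x ∈ s \ b, φ x := by
  have hsb : (0 : ℝ) < #(s \ b) := by exact_mod_cast hne.card_pos
  have hs : (#(s \ b) : ℝ) ≤ #s := by exact_mod_cast card_le_card sdiff_subset
  have hsum : ∑ x, φ x = ∑ x ∈ s, φ x :=
    (sum_subset (subset_univ s) fun x _ hx => hφs x hx).symm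
  have hblocked : ∑ x ∈ s, φ x ≤ ∑ x ∈ s \ b, φ x + #b := by
    rw [← sum_inter_add_sum_sdiff s b, add_comm]
    gcongr
    calc ∑ x ∈ s ∩ b, φ x ≤ #(s ∩ b) := by simpa using sum_le_sum fun x _ => hφ1 x
      _ ≤ #b := by exact_mod_cast card_le_card inter_subset_right
  have hsdiff0 : 0 ≤ ∑ x ∈ s \ b, φ x := sum_nonneg fun x _ => hφ0 x
  rw [Fintype.expect_eq_sum_div_card, expect_eq_sum_div_card, hsum]
  calc (∑ x ∈ s, φ x) / Fintype.card α - β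
      ≤ (∑ x ∈ s, φ x) / #s - #b / #s := by
        have hsα : (#s : ℝ) ≤ Fintype.card α := by exact_mod_cast card_le_univ s
        have hsum0 : 0 ≤ ∑ x ∈ s, φ x := sum_nonneg fun x _ => hφ0 x
        gcongr ?_ - ?_
        · exact div_le_div_of_nonneg_left hsum0 (hsb.trans_le hs) hsα
        · exact (div_le_iff₀ (hsb.trans_le hs)).2 hb
    _ ≤ (∑ x ∈ s \ b, φ x) / #s := by
        rw [← sub_div]; gcongr; linarith
    _ ≤ (∑ x ∈ s \ b, φ x) / #(s \ b) := by gcongr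

end unifOn

section update

variable {ι : Type*} [DecidableEq ι] {X : ι → Type*} [∀ i, Fintype (X i)]

lemma Fintype.sum_sum_update [Fintype ι] {R : Type*} [AddCommMonoid R] (i : ι)
    (h : (∀ j, X j) → R) :
    ∑ a, ∑ x, h (update a i x) = Fintype.card (X i) • ∑ a, h a := by
  let e : (∀ j, X j) × X i → (∀ j, X j) × X i := fun p => (update p.1 i p.2, p.1 i)
  have he : Involutive e := fun p => by simp [e]
  calc ∑ a, ∑ x, h (update a i x) = ∑ p, h (e p).1 := Fintype.sum_prod_type' _ |>.symm
    _ = ∑ p : (∀ j, X j) × X i, h p.1 := Equiv.sum_comp (he.toPerm e) fun p => h p.1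
    _ = Fintype.card (X i) • ∑ a, h a := by
        rw [Fintype.sum_prod_type]; simp [sum_const, smul_sum]

lemma card_smul_sum_mul_unifOn_mul [Fintype ι] [∀ i, DecidableEq (X i)] (i : ι)
    {w : (∀ j, X j) → ℝ} {s : (∀ j, X j) → Finset (X i)} (hw : ∀ a x, w (update a i x) = w a)
    (hs : ∀ a x, s (update a i x) = s a) (g : (∀ j, X j) → ℝ) :
    Fintype.card (X i) • ∑ a, w a * unifOn (s a) (a i) * g a
      = ∑ a, w a * 𝔼 x ∈ s a, g (update a i x) := by
  rw [← Fintype.sum_sum_update i]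
  refine sum_congr rfl fun a _ => ?_
  simp only [hw, hs, update_self, mul_assoc, ← mul_sum, sum_unifOn_mul]

lemma expect_update_sub_le_expect_sdiff [∀ i, DecidableEq (X i)] {I : Finset ι}
    {f : (∀ j, X j) → ℝ} (hf0 : ∀ a, 0 ≤ f a) (hf1 : ∀ a, f a ≤ 1)
    (hfdep : ∀ a b : ∀ j, X j, (∀ i ∈ I, a i = b i) → f a = f b) {β : ℝ} (a : ∀ j, X j)
    {M : ι} {s b : Finset (X M)} (hne : (s \ b).Nonempty) (hb : (#b : ℝ) ≤ β * #s)
    (hs : M ∈ I → ∀ x, 0 < f (update a M x) → x ∈ s) :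
    𝔼 x, f (update a M x) - (if M ∈ I then β else 0) ≤ 𝔼 x ∈ s \ b, f (update a M x) := by
  split_ifs with hM
  · refine expect_sub_le_expect_sdiff hne hb (fun _ => hf0 _) (fun _ => hf1 _) fun x hx => ?_
    by_contra hfx
    exact hx (hs hM x ((hf0 _).lt_of_ne' hfx))
  · have hconst : ∀ x, f (update a M x) = f a := fun x =>
      hfdep _ _ fun i hi => update_of_ne (ne_of_mem_of_not_mem hi hM) _ _
    have : Nonempty (X M) := ⟨hne.choose⟩
    simp only [hconst, sub_zero, expect_const univ_nonempty, expect_const hne, le_refl]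

end update

lemma Fin.card_filter_val_lt_succ {t m : ℕ} (hm : m < t) (I : Finset (Fin t)) :
    #(I.filter fun i : Fin t => (i : ℕ) < m + 1)
      = #(I.filter fun i : Fin t => (i : ℕ) < m) + if ⟨m, hm⟩ ∈ I then 1 else 0 := by
  rw [card_filter, card_filter, ← sum_ite_eq' I ⟨m, hm⟩ fun _ => 1, ← sum_add_distrib]
  refine sum_congr rfl fun i _ => ?_
  simp only [Fin.ext_iff]
  split_ifs <;> omega

lemma Fin.apply_update_of_le {t : ℕ} {X : Fin t → Type*} {Y : Type*} {i M : Fin t} (hiM : i ≤ M)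
    {T : (∀ j, X j) → Y} (hT : ∀ u v : ∀ j, X j, (∀ j, j < i → u j = v j) → T u = T v)
    (a : ∀ j, X j) (x : X M) :
    T (update a M x) = T a :=
  hT _ _ fun _ hj => update_of_ne (hj.trans_le hiM).ne _ _

namespace DDWB

variable {t : ℕ} {X : Fin t → Type*} [∀ i, Fintype (X i)] [∀ i, DecidableEq (X i)]
  (S F : ∀ i : Fin t, (∀ j : Fin t, X j) → Finset (X i))

noncomputable def hybridMass (m : ℕ) (a : ∀ j, X j) : ℝ :=
  ∏ i : Fin t, unifOn (if (i : ℕ) < m then S i a \ F i a else univ) (a i)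

lemma hybridMass_nonneg (m : ℕ) (a : ∀ j, X j) : 0 ≤ hybridMass S F m a :=
  prod_nonneg fun _ _ => unifOn_nonneg _ _

lemma hybridMass_zero (a : ∀ j, X j) :
    hybridMass S F 0 a = (∏ i, (Fintype.card (X i) : ℝ))⁻¹ := by
  simp [hybridMass, unifOn_univ]

lemma sum_hybridMass_zero_mul (g : (∀ j, X j) → ℝ) :
    ∑ a, hybridMass S F 0 a * g a = (∑ a, g a) / ∏ i, (Fintype.card (X i) : ℝ) := by
  simp only [hybridMass_zero, inv_mul_eq_div, sum_div]

lemma hybridMass_self : hybridMass S F t = ddwbMass S F :=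
  funext fun a => prod_congr rfl fun i _ => by rw [if_pos i.isLt]; rfl

variable {S F}

lemma hybridMass_succ [∀ i, Nonempty (X i)] {m : ℕ} (hm : m < t) (a : ∀ j, X j) :
    hybridMass S F (m + 1) a = Fintype.card (X ⟨m, hm⟩) * hybridMass S F m a
      * unifOn (S ⟨m, hm⟩ a \ F ⟨m, hm⟩ a) (a ⟨m, hm⟩) := by
  set M : Fin t := ⟨m, hm⟩
  have hcard : (Fintype.card (X M) : ℝ) ≠ 0 := by exact_mod_cast Fintype.card_ne_zero
  unfold hybridMass
  rw [← mul_prod_erase univ _ (mem_univ M), ← mul_prod_erase univ _ (mem_univ M),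
    if_pos (Nat.lt_succ_self m), if_neg (lt_irrefl m), unifOn_univ, ← mul_assoc,
    mul_inv_cancel₀ hcard, one_mul, mul_comm]
  refine congrArg (· * _) (prod_congr rfl fun i hi => ?_)
  have hi : (i : ℕ) ≠ m := fun h => (mem_erase.1 hi).1 (Fin.ext h)
  simp only [show (i : ℕ) < m + 1 ↔ (i : ℕ) < m by omega]

variable
  (hSpre : ∀ i : Fin t, ∀ u v : ∀ j : Fin t, X j, (∀ j, j < i → u j = v j) → S i u = S i v)
  (hFpre : ∀ i : Fin t, ∀ u v : ∀ j : Fin t, X j, (∀ j, j < i → u j = v j) → F i u = F i v)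
include hSpre hFpre

lemma hybridMass_update {m : ℕ} {M : Fin t} (hmM : m ≤ M) (a : ∀ j, X j) (x : X M) :
    hybridMass S F m (update a M x) = hybridMass S F m a := by
  refine prod_congr rfl fun i _ => ?_
  split_ifs with hi
  · have hiM : i < M := Fin.lt_def.2 (hi.trans_le hmM)
    rw [Fin.apply_update_of_le hiM.le (hSpre i), Fin.apply_update_of_le hiM.le (hFpre i),
      update_of_ne hiM.ne]
  · simp only [unifOn_univ]

variable [∀ i, Nonempty (X i)]

lemma sum_hybridMass_succ_mul {m : ℕ} (hm : m < t) (g : (∀ j, X j) → ℝ) :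
    ∑ a, hybridMass S F (m + 1) a * g a
      = ∑ a, hybridMass S F m a * 𝔼 x ∈ S ⟨m, hm⟩ a \ F ⟨m, hm⟩ a, g (update a ⟨m, hm⟩ x) := by
  rw [← card_smul_sum_mul_unifOn_mul _ (hybridMass_update hSpre hFpre (M := ⟨m, hm⟩) le_rfl)
    fun _ _ => by
      rw [Fin.apply_update_of_le le_rfl (hSpre _), Fin.apply_update_of_le le_rfl (hFpre _)]]
  simp only [hybridMass_succ hm, nsmul_eq_mul, mul_sum, mul_assoc]

lemma sum_hybridMass_mul {m : ℕ} (hm : m < t) (g : (∀ j, X j) → ℝ) :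
    ∑ a, hybridMass S F m a * g a
      = ∑ a, hybridMass S F m a * 𝔼 x, g (update a ⟨m, hm⟩ x) := by
  have hcard : (Fintype.card (X ⟨m, hm⟩) : ℝ) ≠ 0 := by exact_mod_cast Fintype.card_ne_zero
  rw [← card_smul_sum_mul_unifOn_mul _ (hybridMass_update hSpre hFpre (M := ⟨m, hm⟩) le_rfl)
    fun _ _ => rfl]
  simp only [unifOn_univ, nsmul_eq_mul, mul_sum]
  refine sum_congr rfl fun a _ => ?_
  field_simp

lemma sum_hybridMass
    (hne : ∀ (i : Fin t) (u : ∀ j : Fin t, X j), (S i u \ F i u).Nonempty) :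
    ∀ m ≤ t, ∑ a, hybridMass S F m a = 1 := by
  intro m
  induction m with
  | zero =>
    intro _
    simp only [hybridMass_zero, sum_const, card_univ, Fintype.card_pi, nsmul_eq_mul,
      Nat.cast_prod]
    exact mul_inv_cancel₀ (by positivity)
  | succ m ih =>
    intro hm
    simpa [← sum_hybridMass_mul hSpre hFpre hm, expect_const (hne _ _), ih (by omega)]
      using sum_hybridMass_succ_mul hSpre hFpre hm (fun _ => 1)

variable {β : ℝ} {I : Finset (Fin t)} {f : (∀ j, X j) → ℝ}
  (hne : ∀ (i : Fin t) (u : ∀ j : Fin t, X j), (S i u \ F i u).Nonempty)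
  (hβ : ∀ (i : Fin t) (u : ∀ j : Fin t, X j), ((F i u).card : ℝ) ≤ β * ((S i u).card : ℝ))
  (hf0 : ∀ a, 0 ≤ f a) (hf1 : ∀ a, f a ≤ 1)
  (hfdep : ∀ a b : ∀ j : Fin t, X j, (∀ i ∈ I, a i = b i) → f a = f b)
  (hsupp : ∀ a : ∀ j : Fin t, X j, 0 < f a → ∀ i ∈ I, a i ∈ S i a)
include hne hβ hf0 hf1 hfdep hsupp

lemma sum_hybridMass_mul_sub_le_succ {m : ℕ} (hm : m < t) :
    ∑ a, hybridMass S F m a * f a - (if ⟨m, hm⟩ ∈ I then β else 0)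
      ≤ ∑ a, hybridMass S F (m + 1) a * f a := by
  rw [sum_hybridMass_mul hSpre hFpre hm, sum_hybridMass_succ_mul hSpre hFpre hm]
  set M : Fin t := ⟨m, hm⟩
  have hloss (a : ∀ j, X j) :=
    expect_update_sub_le_expect_sdiff hf0 hf1 hfdep a (hne M a) (hβ M a) fun hM x hx => by
      simpa [Fin.apply_update_of_le le_rfl (hSpre M)] using hsupp _ hx M hM
  calc _ = ∑ a, hybridMass S F m a * (𝔼 x, f (update a M x) - if M ∈ I then β else 0) := by
        simp only [mul_sub, sum_sub_distrib, ← sum_mul, sum_hybridMass hSpre hFpre hne m hm.le,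
          one_mul]
    _ ≤ _ := sum_le_sum fun a _ =>
        mul_le_mul_of_nonneg_left (hloss a) (hybridMass_nonneg S F m a)

lemma sum_hybridMass_zero_mul_sub_le :
    ∀ m ≤ t, ∑ a, hybridMass S F 0 a * f a - #(I.filter fun i : Fin t => (i : ℕ) < m) * β
      ≤ ∑ a, hybridMass S F m a * f a := by
  intro m
  induction m with
  | zero => simp
  | succ m ih =>
    intro hm
    have hstep := sum_hybridMass_mul_sub_le_succ hSpre hFpre hne hβ hf0 hf1 hfdep hsupp hm
    rw [Fin.card_filter_val_lt_succ hm]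
    split_ifs at hstep ⊢ <;> push_cast <;> linarith [ih (by omega)]

end DDWB

/-- loss-of-expectation lemma for DDWB distributions:
Let `(S,F)` be a DDWB process on `X₁ × ⋯ × X_t` with distribution `π` and blockage bound
`≤ β`.  Let `f : X₁ × ⋯ × X_t → [0,1]` depend only on `k` coordinates `i₁,…,i_k`, and
assume that whenever `f(a) > 0`, each `a_{i_j} ∈ S_{i_j}(a₁,…,a_{i_j−1})`.  Then
`Σ_a π(a)·f(a) ≥ (Σ_a f(a)) / (|X₁|⋯|X_t|) − k·β`. -/
theorem stmt9 (t : ℕ) (X : Fin t → Type*) [∀ i, Fintype (X i)] [∀ i, DecidableEq (X i)]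
    [∀ i, Nonempty (X i)]
    (S F : ∀ i : Fin t, (∀ j : Fin t, X j) → Finset (X i))
    (hSpre : ∀ i : Fin t, ∀ u v : ∀ j : Fin t, X j, (∀ j, j < i → u j = v j) → S i u = S i v)
    (hFpre : ∀ i : Fin t, ∀ u v : ∀ j : Fin t, X j, (∀ j, j < i → u j = v j) → F i u = F i v)
    (hne : ∀ (i : Fin t) (u : ∀ j : Fin t, X j), (S i u \ F i u).Nonempty)
    (β : ℝ) (hβ : ∀ (i : Fin t) (u : ∀ j : Fin t, X j), ((F i u).card : ℝ) ≤ β * ((S i u).card : ℝ))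
    (k : ℕ) (I : Finset (Fin t)) (hI : I.card = k)
    (f : (∀ j : Fin t, X j) → ℝ) (hf0 : ∀ a, 0 ≤ f a) (hf1 : ∀ a, f a ≤ 1)
    (hfdep : ∀ a b : ∀ j : Fin t, X j, (∀ i ∈ I, a i = b i) → f a = f b)
    (hsupp : ∀ a : ∀ j : Fin t, X j, 0 < f a → ∀ i ∈ I, a i ∈ S i a) :
    (∑ a : ∀ j : Fin t, X j, f a) / (∏ i, (Fintype.card (X i) : ℝ)) - (k : ℝ) * β ≤
      ∑ a : ∀ j : Fin t, X j, ddwbMass S F a * f a := by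
  have h := DDWB.sum_hybridMass_zero_mul_sub_le hSpre hFpre hne hβ hf0 hf1 hfdep hsupp t le_rfl
  rwa [filter_true_of_mem fun i _ => i.isLt, hI, DDWB.hybridMass_self,
    DDWB.sum_hybridMass_zero_mul] at h
end

section
/- Let δ ∈ (0,1] and let m be an integer with m ≥ 36/δ. Let (E,V) be a partition datum on {1,…,3m} with δ(E,V) ≥ δ, and define N3 and G with parameter δ. Then the sum, over all tuples (i, i', (j1,j2,j3), (j'1,j'2)) ∈ {1,…,m}^2 × {1,…,2m+1}^3 × {1,…,2m+1}^2 such that i ∈ G, i' ∈ G, (j1,j2,j3) ∈ N3(i) and (j2, j'1, j'2) ∈ N3(i'), of |E_i[V_{j1} ∩ V_{j2} ∩ V_{j3}] ∩ E_{i'}[V_{j'1} ∩ V_{j'2}]| / C(3m,2), is at least (δ(E,V)/2) · m^2 · (2m+1)^5. -/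
/-!
Weight each index tuple `((i, i'), (j₁, j₂, j₃), (j'₁, j'₂))` by
`|E_i[V_{j₁} ∩ V_{j₂} ∩ V_{j₃}] ∩ E_{i'}[V_{j'₁} ∩ V_{j'₂}]|`. Since an edge lies in both
sets exactly when it lies in `E_i[V_{j_k}] ∩ E_{i'}[V_{j_k}]` for all five `k`, the total weight
is `δ(E,V) · m²(2m+1)⁵ · C(3m,2)`, and it suffices to show that the tuples outside the sum carry
at most `δ/2` of the normalisation `m²(2m+1)⁵ · C(3m,2)`. Such a tuple falls into one of three
classes. If `(j₁, j₂, j₃)` or `(j₂, j'₁, j'₂)` has a repeated index, its weight is at most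
`C(3m,2)`, but there are at most `6m²(2m+1)⁴` of them, and `6/(2m+1) ≤ δ/12` because
`m ≥ 36/δ`. If one of these two triples is pairwise distinct but not in `N3`, the weight is below
`δ/3 · C(3m,2)`. Otherwise both triples lie in `N3`, but `i` or `i'` is outside `G`, and for each
pair `(i, i')` fewer than `δ/12 · (2m+1)⁵` tuples do this. In total: `δ/3 + δ/12 + δ/12 = δ/2`.
-/

open scoped Classical

open Finset

section Triples

variable {α : Type*}

abbrev TriplePair (α : Type*) := (α × α × α) × (α × α)

def IsDistinctTriple (t : α × α × α) : Prop :=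
  t.1 ≠ t.2.1 ∧ t.2.1 ≠ t.2.2 ∧ t.1 ≠ t.2.2

def rightTriple (y : TriplePair α) : α × α × α := (y.1.2.1, y.2.1, y.2.2)

def rightTripleEquiv : TriplePair α ≃ (α × α × α) × (α × α) where
  toFun y := (rightTriple y, (y.1.1, y.1.2.2))
  invFun z := ((z.2.1, z.1.1, z.2.2), (z.1.2.1, z.1.2.2))
  left_inv _ := rfl
  right_inv _ := rfl

def triplePairEquivFin : TriplePair α ≃ (Fin 5 → α) where
  toFun y := ![y.1.1, y.1.2.1, y.1.2.2, y.2.1, y.2.2]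
  invFun v := ((v 0, v 1, v 2), (v 3, v 4))
  left_inv _ := rfl
  right_inv v := by ext k; fin_cases k <;> rfl

lemma card_not_isDistinctTriple_le [Fintype α] :
    #{t : α × α × α | ¬IsDistinctTriple t} ≤ 3 * Fintype.card α ^ 2 := by
  let collapse : Fin 3 × α × α → α × α × α := fun
    | (0, a, b) => (a, a, b)
    | (1, a, b) => (a, b, b)
    | (2, a, b) => (a, b, a)
  have hsub : ({t | ¬IsDistinctTriple t} : Finset (α × α × α)) ⊆ univ.image collapse := by
    rintro ⟨a, b, c⟩ ht
    simp only [IsDistinctTriple, mem_filter, mem_univ, true_and, not_and_or, not_not] at ht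
    simp only [mem_image, mem_univ, true_and]
    rcases ht with rfl | rfl | rfl
    · exact ⟨(0, a, c), rfl⟩
    · exact ⟨(1, a, b), rfl⟩
    · exact ⟨(2, a, b), rfl⟩
  calc _ ≤ #(univ.image collapse) := card_le_card hsub
    _ ≤ Fintype.card (Fin 3 × α × α) := card_image_le.trans_eq card_univ
    _ = 3 * Fintype.card α ^ 2 := by simp [Fintype.card_prod, sq]

lemma card_filter_comp_of_equiv [Fintype α] {β γ : Type*} [Fintype β] [Fintype γ]
    (e : β ≃ α × γ) {f : β → α} (hf : ∀ b, (e b).1 = f b) (P : α → Prop) [DecidablePred P] :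
    #{b | P (f b)} = #{a | P a} * Fintype.card γ := by
  have : ({b | P (f b)} : Finset β) =
      (({a | P a} : Finset α) ×ˢ (univ : Finset γ)).map e.symm.toEmbedding := by
    ext b
    simp [← hf]
  rw [this, card_map, card_product, card_univ]

lemma card_not_isDistinctTriple_or_le [Fintype α] :
    #{y : TriplePair α | ¬IsDistinctTriple y.1 ∨ ¬IsDistinctTriple (rightTriple y)} ≤
      6 * Fintype.card α ^ 4 := by
  have hleft := card_filter_comp_of_equiv (Equiv.refl (TriplePair α)) (f := Prod.fst)
    (fun _ => rfl) (fun t : α × α × α => ¬IsDistinctTriple t)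
  have hright := card_filter_comp_of_equiv rightTripleEquiv (f := rightTriple) (fun _ => rfl)
    (fun t : α × α × α => ¬IsDistinctTriple t)
  have hND := card_not_isDistinctTriple_le (α := α)
  rw [filter_or]
  refine (card_union_le _ _).trans ?_
  rw [hleft, hright, Fintype.card_prod]
  nlinarith

end Triples

lemma card_filter_prod_le {α β : Type*} [Fintype α] [Fintype β] (P : α × β → Prop)
    [DecidablePred P] {c : ℝ}
    (h : ∀ a, (#{b | P (a, b)} : ℝ) ≤ c) : (#{x | P x} : ℝ) ≤ Fintype.card α * c := by
  have hfib : #{x | P x} = ∑ a, #{b | P (a, b)} := by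
    simp only [card_filter]
    exact Fintype.sum_prod_type _
  rw [hfib, Nat.cast_sum, ← nsmul_eq_mul, ← card_univ]
  exact sum_le_card_nsmul _ _ _ fun a _ => h a

lemma sum_union_le_of_nonneg {ι : Type*} [DecidableEq ι] {f : ι → ℝ} (hf : ∀ i, 0 ≤ f i)
    (s t : Finset ι) :
    ∑ i ∈ s ∪ t, f i ≤ ∑ i ∈ s, f i + ∑ i ∈ t, f i := by
  rw [← sum_union_inter]
  linarith [sum_nonneg fun i (_ : i ∈ s ∩ t) => hf i]

abbrev IndexTuple (m : ℕ) := (Fin m × Fin m) × TriplePair (Fin (2 * m + 1))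

section PartitionDatum

variable {m : ℕ} (E : Fin m → Finset (Finset (Fin (3 * m))))
  (V : Fin (2 * m + 1) → Finset (Fin (3 * m))) (δ : ℝ)

def commonEdges (x : IndexTuple m) : Finset (Finset (Fin (3 * m))) :=
  (((E x.1.1).filter fun e => e ⊆ V x.2.1.1 ∩ V x.2.1.2.1 ∩ V x.2.1.2.2) ∩
    ((E x.1.2).filter fun e => e ⊆ V x.2.2.1 ∩ V x.2.2.2))

abbrev IsGoodTuple (x : IndexTuple m) : Prop :=
  x.1.1 ∈ Gset m E V δ ∧ x.1.2 ∈ Gset m E V δ ∧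
    x.2.1 ∈ N3 m E V δ x.1.1 ∧ rightTriple x.2 ∈ N3 m E V δ x.1.2

lemma card_inf_filter_subset_eq (i₁ i₂ : Fin m) (y : TriplePair (Fin (2 * m + 1))) :
    #(univ.inf fun k : Fin 5 =>
        ((E i₁).filter fun e => e ⊆ V (triplePairEquivFin y k)) ∩
        ((E i₂).filter fun e => e ⊆ V (triplePairEquivFin y k))) =
      #(commonEdges E V ((i₁, i₂), y)) := by
  rw [commonEdges]
  congr 1
  ext e
  simp only [mem_inf, mem_univ, forall_const, mem_inter, mem_filter, subset_inter_iff]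
  simp only [Fin.forall_fin_succ, triplePairEquivFin, IsEmpty.forall_iff]
  tauto

lemma sum_card_commonEdges_eq_density (hm : 0 < m) :
    ∑ x, (#(commonEdges E V x) : ℝ) =
      density m E V * ((m : ℝ) ^ 2 * (2 * (m : ℝ) + 1) ^ 5 * ((3 * m).choose 2 : ℝ)) := by
  have hC : 0 < (3 * m).choose 2 := Nat.choose_pos (by omega)
  rw [density, div_mul_cancel₀ _ (by positivity), Fintype.sum_prod_type]
  refine sum_congr rfl fun p _ => ?_
  rw [← (triplePairEquivFin (α := Fin (2 * m + 1))).sum_comp]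
  exact sum_congr rfl fun y _ => by rw [card_inf_filter_subset_eq]

lemma card_commonEdges_le_choose (hE2 : ∀ i, ∀ e ∈ E i, e.card = 2) (x : IndexTuple m) :
    #(commonEdges E V x) ≤ (3 * m).choose 2 := by
  have hsized : Set.Sized 2 (commonEdges E V x : Set (Finset (Fin (3 * m)))) := fun e he =>
    hE2 x.1.1 e (mem_filter.1 (mem_inter.1 he).1).1
  simpa using hsized.card_le

lemma card_commonEdges_le_left (x : IndexTuple m) :
    #(commonEdges E V x) ≤ #((E x.1.1).filter fun e => e ⊆ V x.2.1.1 ∩ V x.2.1.2.1 ∩ V x.2.1.2.2) :=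
  card_le_card inter_subset_left

lemma card_commonEdges_le_right (x : IndexTuple m) :
    #(commonEdges E V x) ≤ #((E x.1.2).filter fun e =>
      e ⊆ V (rightTriple x.2).1 ∩ V (rightTriple x.2).2.1 ∩ V (rightTriple x.2).2.2) := by
  refine card_le_card fun e he => ?_
  simp only [commonEdges, mem_inter, mem_filter, subset_inter_iff, rightTriple] at he ⊢
  tauto

lemma mem_N3_iff {i : Fin m} {j : Fin (2 * m + 1) × Fin (2 * m + 1) × Fin (2 * m + 1)} :
    j ∈ N3 m E V δ i ↔ IsDistinctTriple j ∧
      δ / 3 * ((3 * m).choose 2 : ℝ) ≤ #((E i).filter fun e => e ⊆ V j.1 ∩ V j.2.1 ∩ V j.2.2) := by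
  simp only [N3, IsDistinctTriple, mem_filter, mem_univ, true_and, and_assoc]

lemma card_commonEdges_le_of_not_mem_N3_left {x : IndexTuple m} (hd : IsDistinctTriple x.2.1)
    (hx : x.2.1 ∉ N3 m E V δ x.1.1) :
    (#(commonEdges E V x) : ℝ) ≤ δ / 3 * (3 * m).choose 2 := by
  rw [mem_N3_iff, not_and, not_le] at hx
  exact (Nat.cast_le.2 (card_commonEdges_le_left E V x)).trans (hx hd).le

lemma card_commonEdges_le_of_not_mem_N3_right {x : IndexTuple m}
    (hd : IsDistinctTriple (rightTriple x.2)) (hx : rightTriple x.2 ∉ N3 m E V δ x.1.2) :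
    (#(commonEdges E V x) : ℝ) ≤ δ / 3 * (3 * m).choose 2 := by
  rw [mem_N3_iff, not_and, not_le] at hx
  exact (Nat.cast_le.2 (card_commonEdges_le_right E V x)).trans (hx hd).le

lemma card_N3_lt_of_not_mem_Gset {i : Fin m} (hi : i ∉ Gset m E V δ) :
    (#(N3 m E V δ i) : ℝ) < δ / 12 * (2 * m + 1) ^ 3 := by
  simpa [Gset] using hi

noncomputable def degenerateTuples (m : ℕ) : Finset (IndexTuple m) :=
  {x | ¬IsDistinctTriple x.2.1 ∨ ¬IsDistinctTriple (rightTriple x.2)}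

noncomputable def sparseTuples : Finset (IndexTuple m) :=
  {x | x.2.1 ∈ N3 m E V δ x.1.1 ∧ rightTriple x.2 ∈ N3 m E V δ x.1.2 ∧
    ¬(x.1.1 ∈ Gset m E V δ ∧ x.1.2 ∈ Gset m E V δ)}

noncomputable def lightTuples : Finset (IndexTuple m) :=
  {x | (#(commonEdges E V x) : ℝ) ≤ δ / 3 * (3 * m).choose 2}

lemma card_degenerateTuples_le : (#(degenerateTuples m) : ℝ) ≤ m ^ 2 * (6 * (2 * m + 1) ^ 4) := by
  have h := card_filter_prod_le
    (fun x : IndexTuple m => ¬IsDistinctTriple x.2.1 ∨ ¬IsDistinctTriple (rightTriple x.2))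
    (c := 6 * (2 * m + 1) ^ 4) fun _ => by
      dsimp only
      exact_mod_cast (card_not_isDistinctTriple_or_le (α := Fin (2 * m + 1))).trans_eq (by simp)
  simpa [degenerateTuples, sq] using h

lemma card_filter_mem_N3_le {i : Fin m} (hi : i ∉ Gset m E V δ)
    {β : Type*} [Fintype β] (e : β ≃ TriplePair (Fin (2 * m + 1)))
    {f : β → Fin (2 * m + 1) × Fin (2 * m + 1) × Fin (2 * m + 1)} (hf : ∀ b, (e b).1 = f b) :
    (#{b | f b ∈ N3 m E V δ i} : ℝ) ≤ δ / 12 * (2 * m + 1) ^ 5 := by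
  rw [card_filter_comp_of_equiv e hf (· ∈ N3 m E V δ i), filter_mem_eq_inter, univ_inter]
  have hN3 := card_N3_lt_of_not_mem_Gset E V δ hi
  push_cast [Fintype.card_prod, Fintype.card_fin]
  nlinarith [sq_nonneg (2 * (m : ℝ) + 1)]

lemma card_sparseTuples_le (hδ : 0 ≤ δ) :
    (#(sparseTuples E V δ) : ℝ) ≤ m ^ 2 * (δ / 12 * (2 * m + 1) ^ 5) := by
  have h := card_filter_prod_le (fun x : IndexTuple m => x.2.1 ∈ N3 m E V δ x.1.1 ∧
    rightTriple x.2 ∈ N3 m E V δ x.1.2 ∧ ¬(x.1.1 ∈ Gset m E V δ ∧ x.1.2 ∈ Gset m E V δ))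
    (c := δ / 12 * (2 * m + 1) ^ 5) fun p => by
      dsimp only
      by_cases h1 : p.1 ∈ Gset m E V δ
      · by_cases h2 : p.2 ∈ Gset m E V δ
        · rw [filter_false_of_mem fun _ _ hy => hy.2.2 ⟨h1, h2⟩, card_empty, Nat.cast_zero]
          positivity
        · refine le_trans ?_ (card_filter_mem_N3_le E V δ h2 rightTripleEquiv fun _ => rfl)
          exact Nat.cast_le.2 (card_le_card (monotone_filter_right _ fun _ _ hy => hy.2.1))
      · refine le_trans ?_ (card_filter_mem_N3_le E V δ h1 (Equiv.refl _) fun _ => rfl)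
        exact Nat.cast_le.2 (card_le_card (monotone_filter_right _ fun _ _ hy => hy.1))
  simpa [sparseTuples, sq] using h

lemma filter_not_isGoodTuple_subset :
    univ.filter (fun x => ¬IsGoodTuple E V δ x) ⊆
      lightTuples E V δ ∪ degenerateTuples m ∪ sparseTuples E V δ := by
  intro x hx
  rw [mem_filter] at hx
  simp only [lightTuples, degenerateTuples, sparseTuples, mem_union, mem_filter, mem_univ,
    true_and]
  by_cases hd : IsDistinctTriple x.2.1 ∧ IsDistinctTriple (rightTriple x.2)
  · by_cases hl : x.2.1 ∈ N3 m E V δ x.1.1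
    · by_cases hr : rightTriple x.2 ∈ N3 m E V δ x.1.2
      · exact Or.inr ⟨hl, hr, fun hG => hx.2 ⟨hG.1, hG.2, hl, hr⟩⟩
      · exact Or.inl (Or.inl (card_commonEdges_le_of_not_mem_N3_right E V δ hd.2 hr))
    · exact Or.inl (Or.inl (card_commonEdges_le_of_not_mem_N3_left E V δ hd.1 hl))
  · exact Or.inl (Or.inr (not_and_or.1 hd))

lemma sum_card_commonEdges_not_good_le (hδ : 0 < δ) (h72 : 72 ≤ δ * (2 * m + 1))
    (hE2 : ∀ i, ∀ e ∈ E i, e.card = 2) :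
    ∑ x ∈ univ.filter (fun x => ¬IsGoodTuple E V δ x), (#(commonEdges E V x) : ℝ) ≤
      δ / 2 * ((m : ℝ) ^ 2 * (2 * (m : ℝ) + 1) ^ 5 * ((3 * m).choose 2 : ℝ)) := by
  set C : ℝ := (((3 * m).choose 2 : ℕ) : ℝ)
  set w : IndexTuple m → ℝ := fun x => #(commonEdges E V x)
  have hw0 : ∀ x, 0 ≤ w x := fun x => Nat.cast_nonneg _
  have hwC : ∀ x, w x ≤ C := fun x => Nat.cast_le.2 (card_commonEdges_le_choose E V hE2 x)
  have hlight : ∑ x ∈ lightTuples E V δ, w x ≤ m ^ 2 * (2 * m + 1) ^ 5 * (δ / 3 * C) := by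
    refine (sum_le_card_nsmul _ _ _ fun x hx => (mem_filter.1 hx).2).trans ?_
    rw [nsmul_eq_mul]
    gcongr
    have hcard : Fintype.card (IndexTuple m) = m ^ 2 * (2 * m + 1) ^ 5 := by
      simp only [Fintype.card_prod, Fintype.card_fin]
      ring
    exact_mod_cast (card_le_univ _).trans_eq hcard
  have hdegenerate : ∑ x ∈ degenerateTuples m, w x ≤ #(degenerateTuples m) * C := by
    simpa using sum_le_card_nsmul _ _ _ fun x _ => hwC x
  have hsparse : ∑ x ∈ sparseTuples E V δ, w x ≤ #(sparseTuples E V δ) * C := by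
    simpa using sum_le_card_nsmul _ _ _ fun x _ => hwC x
  have hD := card_degenerateTuples_le (m := m)
  have hS := card_sparseTuples_le E V δ hδ.le
  calc ∑ x ∈ univ.filter (fun x => ¬IsGoodTuple E V δ x), w x
      ≤ ∑ x ∈ lightTuples E V δ ∪ degenerateTuples m ∪ sparseTuples E V δ, w x :=
        sum_le_sum_of_subset_of_nonneg (filter_not_isGoodTuple_subset E V δ) fun x _ _ => hw0 x
    _ ≤ ∑ x ∈ lightTuples E V δ, w x + ∑ x ∈ degenerateTuples m, w x +
          ∑ x ∈ sparseTuples E V δ, w x := by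
        linarith [sum_union_le_of_nonneg hw0 (lightTuples E V δ ∪ degenerateTuples m)
          (sparseTuples E V δ), sum_union_le_of_nonneg hw0 (lightTuples E V δ) (degenerateTuples m)]
    _ ≤ _ := by
        have hC : 0 ≤ C := Nat.cast_nonneg _
        nlinarith [mul_le_mul_of_nonneg_right hD hC, mul_le_mul_of_nonneg_right hS hC,
          mul_le_mul_of_nonneg_right h72 (by positivity : (0 : ℝ) ≤ m ^ 2 * (2 * m + 1) ^ 4 * C)]

end PartitionDatum

theorem stmt11_general (δ : ℝ) (hδ0 : 0 < δ) (m : ℕ) (hm : 36 / δ ≤ (m : ℝ))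
    (E : Fin m → Finset (Finset (Fin (3 * m))))
    (hE2 : ∀ i, ∀ e ∈ E i, e.card = 2)
    (V : Fin (2 * m + 1) → Finset (Fin (3 * m)))
    (hdens : δ ≤ density m E V) :
    (density m E V / 2) * (m : ℝ) ^ 2 * (2 * (m : ℝ) + 1) ^ 5 ≤
      ∑ x ∈ (Finset.univ.filter
          (fun x : (Fin m × Fin m) ×
              (Fin (2 * m + 1) × Fin (2 * m + 1) × Fin (2 * m + 1)) ×
              (Fin (2 * m + 1) × Fin (2 * m + 1)) =>
            x.1.1 ∈ Gset m E V δ ∧ x.1.2 ∈ Gset m E V δ ∧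
              x.2.1 ∈ N3 m E V δ x.1.1 ∧
              (x.2.1.2.1, x.2.2.1, x.2.2.2) ∈ N3 m E V δ x.1.2)),
        ((((E x.1.1).filter fun e => e ⊆ V x.2.1.1 ∩ V x.2.1.2.1 ∩ V x.2.1.2.2) ∩
          ((E x.1.2).filter fun e => e ⊆ V x.2.2.1 ∩ V x.2.2.2)).card : ℝ) /
          ((3 * m).choose 2 : ℝ) := by
  have hδm : 36 ≤ δ * m := by rwa [div_le_iff₀ hδ0, mul_comm] at hm
  have hm0 : 0 < m := Nat.pos_of_ne_zero fun h => by simp [h] at hδm; linarith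
  have hC : (0 : ℝ) < (3 * m).choose 2 := by exact_mod_cast Nat.choose_pos (by omega)
  have hMC : (0 : ℝ) ≤ m ^ 2 * (2 * m + 1) ^ 5 * (3 * m).choose 2 := by positivity
  rw [← sum_div, le_div_iff₀ hC]
  change _ ≤ ∑ x ∈ univ.filter (IsGoodTuple E V δ), (#(commonEdges E V x) : ℝ)
  have htotal := sum_card_commonEdges_eq_density E V hm0
  have hbad := sum_card_commonEdges_not_good_le E V δ hδ0 (by nlinarith) hE2
  have hsplit := sum_filter_add_sum_filter_not univ (IsGoodTuple E V δ)
    fun x => (#(commonEdges E V x) : ℝ)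
  nlinarith [mul_le_mul_of_nonneg_right hdens hMC]

/-- Let `δ ∈ (0,1]` and `m ≥ 36/δ` an integer.  Let `(E,V)` be a partition
datum on `{1,…,3m}` with `δ(E,V) ≥ δ`, and define `N3` and `G` with parameter `δ`.  Then
the sum over all tuples `(i, i', (j₁,j₂,j₃), (j'₁,j'₂))` with `i ∈ G`, `i' ∈ G`,
`(j₁,j₂,j₃) ∈ N3(i)` and `(j₂,j'₁,j'₂) ∈ N3(i')` of
`|E_i[V_{j₁} ∩ V_{j₂} ∩ V_{j₃}] ∩ E_{i'}[V_{j'₁} ∩ V_{j'₂}]| / C(3m,2)` is at least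
`(δ(E,V)/2)·m²·(2m+1)⁵`. -/
theorem stmt11 (δ : ℝ) (hδ0 : 0 < δ) (hδ1 : δ ≤ 1) (m : ℕ) (hm : 36 / δ ≤ (m : ℝ))
    (E : Fin m → Finset (Finset (Fin (3 * m))))
    (hE2 : ∀ i, ∀ e ∈ E i, e.card = 2)
    (V : Fin (2 * m + 1) → Finset (Fin (3 * m)))
    (hdens : δ ≤ density m E V) :
    (density m E V / 2) * (m : ℝ) ^ 2 * (2 * (m : ℝ) + 1) ^ 5 ≤
      ∑ x ∈ (Finset.univ.filter
          (fun x : (Fin m × Fin m) ×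
              (Fin (2 * m + 1) × Fin (2 * m + 1) × Fin (2 * m + 1)) ×
              (Fin (2 * m + 1) × Fin (2 * m + 1)) =>
            x.1.1 ∈ Gset m E V δ ∧ x.1.2 ∈ Gset m E V δ ∧
              x.2.1 ∈ N3 m E V δ x.1.1 ∧
              (x.2.1.2.1, x.2.2.1, x.2.2.2) ∈ N3 m E V δ x.1.2)),
        ((((E x.1.1).filter fun e => e ⊆ V x.2.1.1 ∩ V x.2.1.2.1 ∩ V x.2.1.2.2) ∩
          ((E x.1.2).filter fun e => e ⊆ V x.2.2.1 ∩ V x.2.2.2)).card : ℝ) /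
          ((3 * m).choose 2 : ℝ) :=
  stmt11_general δ hδ0 m hm E hE2 V hdens
end

section
/- Let Ω be a finite set, let μ : Ω → ℝ be a nonnegative function, let S ⊆ Ω, and let A : Ω → 𝒜 and pe : Ω → ℰ be functions into arbitrary types. Let c > 0 and suppose f : S → S satisfies, for every L ∈ S: f(f(L)) = L, A(f(L)) = A(L), pe(f(L)) ≠ pe(L), and μ(f(L)) ≥ c · μ(L). Then for every a ∈ 𝒜 and every e ∈ ℰ, Σ_{L ∈ S with A(L) = a and pe(L) = e} μ(L) ≤ (1/(1+c)) · Σ_{L ∈ S with A(L) = a} μ(L). -/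
/-!
The involution `f` sends each `L` with `A L = a`, `pe L = e` injectively to a partner with the
same `A`-value but a different `pe`-value, of mass at least `c * μ L`. So the class `A = a`
contains the `(a, e)`-class together with a disjoint copy of mass at least `c` times as large.
-/

open Finset

theorem Finset.one_add_mul_sum_le_sum_of_injOn {ι R : Type*} [CommSemiring R] [PartialOrder R]
    [IsOrderedRing R] {T U : Finset ι} {g : ι → ι} {w : ι → R} {c : R}
    (hTU : T ⊆ U) (hg : Set.InjOn g T) (hgU : ∀ x ∈ T, g x ∈ U) (hgT : ∀ x ∈ T, g x ∉ T)
    (hw : ∀ x ∈ U, 0 ≤ w x) (hgw : ∀ x ∈ T, c * w x ≤ w (g x)) :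
    (1 + c) * ∑ x ∈ T, w x ≤ ∑ x ∈ U, w x := by
  classical
  have hdisj : Disjoint T (T.image g) := by
    simpa [disjoint_right] using hgT
  have hsub : T ∪ T.image g ⊆ U :=
    union_subset hTU fun _ hy ↦ by
      obtain ⟨x, hx, rfl⟩ := mem_image.mp hy
      exact hgU x hx
  calc (1 + c) * ∑ x ∈ T, w x = ∑ x ∈ T, w x + ∑ x ∈ T, c * w x := by
        rw [add_mul, one_mul, mul_sum]
    _ ≤ ∑ x ∈ T, w x + ∑ x ∈ T, w (g x) := by gcongr with x hx; exact hgw x hx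
    _ = ∑ x ∈ T ∪ T.image g, w x := by rw [sum_union hdisj, sum_image hg]
    _ ≤ ∑ x ∈ U, w x := sum_le_sum_of_subset_of_nonneg hsub fun x hx _ ↦ hw x hx

theorem stmt12_general {Ω 𝒜 ℰ : Type*} [DecidableEq 𝒜] [DecidableEq ℰ]
    (μ : Ω → ℝ) (hμ : ∀ x, 0 ≤ μ x) (S : Finset Ω)
    (A : Ω → 𝒜) (pe : Ω → ℰ) (c : ℝ) (hc : 0 < c)
    (f : Ω → Ω) (hfS : ∀ L ∈ S, f L ∈ S)
    (hff : ∀ L ∈ S, f (f L) = L)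
    (hfA : ∀ L ∈ S, A (f L) = A L)
    (hfpe : ∀ L ∈ S, pe (f L) ≠ pe L)
    (hfμ : ∀ L ∈ S, c * μ L ≤ μ (f L))
    (a : 𝒜) (e : ℰ) :
    ∑ L ∈ S.filter (fun L => A L = a ∧ pe L = e), μ L ≤
      (1 / (1 + c)) * ∑ L ∈ S.filter (fun L => A L = a), μ L := by
  have hinj : Set.InjOn f (S.filter fun L => A L = a ∧ pe L = e) :=
    Set.LeftInvOn.injOn fun L hL ↦ hff L (mem_filter.mp hL).1
  have key := one_add_mul_sum_le_sum_of_injOn (U := S.filter fun L => A L = a) (w := μ)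
    (fun L hL ↦ by grind) hinj (fun L hL ↦ by grind) (fun L hL ↦ by grind)
    (fun L _ ↦ hμ L) (fun L hL ↦ hfμ L (mem_filter.mp hL).1)
  rw [one_div, inv_mul_eq_div, le_div_iff₀ (by linarith)]
  linarith

/-- Let `Ω` be a finite set, `μ : Ω → ℝ` nonnegative, `S ⊆ Ω`, and let
`A : Ω → 𝒜`, `pe : Ω → ℰ` be functions.  Let `c > 0` and suppose `f : S → S` satisfies,
for every `L ∈ S`: `f(f(L)) = L`, `A(f(L)) = A(L)`, `pe(f(L)) ≠ pe(L)`, and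
`μ(f(L)) ≥ c·μ(L)`.  Then for every `a` and `e`,
`Σ_{L ∈ S, A(L)=a, pe(L)=e} μ(L) ≤ (1/(1+c)) Σ_{L ∈ S, A(L)=a} μ(L)`. -/
theorem stmt12 {Ω 𝒜 ℰ : Type*} [Fintype Ω] [DecidableEq 𝒜] [DecidableEq ℰ]
    (μ : Ω → ℝ) (hμ : ∀ x, 0 ≤ μ x) (S : Finset Ω)
    (A : Ω → 𝒜) (pe : Ω → ℰ) (c : ℝ) (hc : 0 < c)
    (f : Ω → Ω) (hfS : ∀ L ∈ S, f L ∈ S)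
    (hff : ∀ L ∈ S, f (f L) = L)
    (hfA : ∀ L ∈ S, A (f L) = A L)
    (hfpe : ∀ L ∈ S, pe (f L) ≠ pe L)
    (hfμ : ∀ L ∈ S, c * μ L ≤ μ (f L))
    (a : 𝒜) (e : ℰ) :
    ∑ L ∈ S.filter (fun L => A L = a ∧ pe L = e), μ L ≤
      (1 / (1 + c)) * ∑ L ∈ S.filter (fun L => A L = a), μ L :=
  stmt12_general μ hμ S A pe c hc f hfS hff hfA hfpe hfμ a e
end

section
/- If A is a non-degenerate assignment to MVars_m for a positive integer m, then there exists a 2-element subset e of {1,…,3m} that is bad for A. -/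
/-- If `A` is a non-degenerate assignment to `MVars_m` (`m ≥ 1`), then
there exists a 2-element subset `e` of `{1,…,3m}` that is bad for `A`.

Here the assignment is given by its values `x i e` on the edge variables `x^i_e`
(`i ∈ [m]`, `e` a 2-element subset of `[3m]`; values on non-2-element sets are irrelevant
since all conditions quantify only over 2-element sets) and `y j u` on the vertex
variables `y^j_u` (`j ∈ [2m+1]`, `u ∈ [3m]`).  Non-degeneracy is the conjunction of the
four stated conditions, and `e = {u,v}` is bad if `A(y^j_u) = A(y^{j'}_v) = A(x^i_e) = 1`
for some `j, j', i`. -/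
theorem stmt14 (m : ℕ) (hm : 1 ≤ m)
    (x : Fin m → Finset (Fin (3 * m)) → Bool)
    (y : Fin (2 * m + 1) → Fin (3 * m) → Bool)
    (h1 : ∀ i, ∃ e : Finset (Fin (3 * m)), e.card = 2 ∧ x i e = true)
    (h2 : ∀ i i' : Fin m, i ≠ i' → ∀ e e' : Finset (Fin (3 * m)),
      e.card = 2 → e'.card = 2 → e ∩ e' ≠ ∅ → ¬(x i e = true ∧ x i' e' = true))
    (h3 : ∀ j, ∃ u, y j u = true)
    (h4 : ∀ j j' : Fin (2 * m + 1), j ≠ j' → ∀ u, ¬(y j u = true ∧ y j' u = true)) :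
    ∃ e : Finset (Fin (3 * m)), e.card = 2 ∧
      ∃ u v : Fin (3 * m), e = {u, v} ∧
        ∃ (j j' : Fin (2 * m + 1)) (i : Fin m),
          y j u = true ∧ y j' v = true ∧ x i e = true := by
  choose f hf2 hfx using h1
  have hdisj : ∀ i i' : Fin m, i ≠ i' → Disjoint (f i) (f i') := by
    intro i i' hne
    rw [Finset.disjoint_iff_inter_eq_empty]
    by_contra hd
    exact h2 i i' hne (f i) (f i') (hf2 i) (hf2 i') hd ⟨hfx i, hfx i'⟩
  choose g hg using h3
  have hginj : Function.Injective g := by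
    intro j j' h
    by_contra hne
    exact h4 j j' hne (g j) ⟨hg j, h ▸ hg j'⟩
  set U : Finset (Fin (3*m)) := Finset.image g Finset.univ with hU
  have hUcard : U.card = 2*m+1 := by
    rw [hU, Finset.card_image_of_injective _ hginj, Finset.card_univ, Fintype.card_fin]
  set C : Finset (Fin (3*m)) := Finset.univ.biUnion f with hC
  have hCcard : C.card = 2*m := by
    rw [hC, Finset.card_biUnion (fun i _ i' _ h => hdisj i i' h)]
    simp [hf2]
    omega
  have hinter : m + 1 ≤ (U ∩ C).card := by
    have h5 := Finset.card_union_add_card_inter U C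
    have h3m : (U ∪ C).card ≤ 3*m := by
      calc (U ∪ C).card ≤ Fintype.card (Fin (3*m)) := Finset.card_le_univ _
      _ = 3*m := Fintype.card_fin _
    omega
  have hsplit : U ∩ C = Finset.univ.biUnion (fun i => (U ∩ C) ∩ f i) := by
    ext v
    simp only [hC, Finset.mem_biUnion, Finset.mem_inter, Finset.mem_univ, true_and]
    tauto
  have hsum : (U ∩ C).card = ∑ i, ((U ∩ C) ∩ f i).card := by
    conv_lhs => rw [hsplit]
    rw [Finset.card_biUnion]
    intro i _ i' _ hne
    exact Finset.disjoint_of_subset_left (Finset.inter_subset_right)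
      (Finset.disjoint_of_subset_right (Finset.inter_subset_right) (hdisj i i' hne))
  have hex : ∃ i, 2 ≤ ((U ∩ C) ∩ f i).card := by
    by_contra hcon
    push_neg at hcon
    have hle : ∑ i, ((U ∩ C) ∩ f i).card ≤ m := by
      calc ∑ i, ((U ∩ C) ∩ f i).card ≤ ∑ _i : Fin m, 1 :=
            Finset.sum_le_sum (fun i _ => by have := hcon i; omega)
        _ = m := by simp
    omega
  obtain ⟨i, hi⟩ := hex
  have heq : (U ∩ C) ∩ f i = f i := by
    apply Finset.eq_of_subset_of_card_le (Finset.inter_subset_right)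
    rw [hf2 i]; exact hi
  have hfU : f i ⊆ U := by
    rw [← heq]; exact (Finset.inter_subset_left).trans Finset.inter_subset_left
  obtain ⟨u, v, huv, hset⟩ := Finset.card_eq_two.mp (hf2 i)
  have hu : u ∈ U := hfU (by rw [hset]; simp)
  have hv : v ∈ U := hfU (by rw [hset]; simp)
  rw [hU] at hu hv
  simp only [Finset.mem_image, Finset.mem_univ, true_and] at hu hv
  obtain ⟨j, hj⟩ := hu
  obtain ⟨j', hj'⟩ := hv
  exact ⟨f i, hf2 i, u, v, hset, j, j', i, hj ▸ hg j, hj' ▸ hg j', hfx i⟩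
end
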